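/- arXiv:math/0510067 — 3 statements merged into one kernel-verified Lean document; each statement's English description precedes it below -/
import Mathlib

section
/- Let n ≥ 1, let f : ℝ → ℝ be a convex function, and let A, B be n×n Hermitian complex matrices. Set X = f((A+B)/2) and Y = (f(A)+f(B))/2. Then there exist n×n unitary matrices U, V such that X ≤ (U Y U* + V Y V*)/2 in the Loewner order. (Result 1.6.) -/
open Matrix ComplexOrder

namespace TU

lemma sum_split {α : Type*} [Fintype α] {M : Type*} [AddCommMonoid M] (p : α → Prop)
    [DecidablePred p] (g : α → M) :
    ∑ i, g i = (∑ i : {x // p x}, g ↑i) + ∑ i : {x // ¬ p x}, g ↑i := by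
  rw [← (Equiv.sumCompl p).sum_comp g, Fintype.sum_sum_type]
  rfl

lemma quad_conj {α : Type*} [Fintype α] (U M : Matrix α α ℂ) (x : α → ℂ) :
    star x ⬝ᵥ (U * M * star U) *ᵥ x
      = star (star U *ᵥ x) ⬝ᵥ M *ᵥ (star U *ᵥ x) := by
  calc star x ⬝ᵥ (U * M * star U) *ᵥ x
      = star x ⬝ᵥ U *ᵥ (M *ᵥ (star U *ᵥ x)) := by rw [mulVec_mulVec, mulVec_mulVec]
    _ = (star x ᵥ* U) ⬝ᵥ (M *ᵥ (star U *ᵥ x)) := dotProduct_mulVec _ _ _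
    _ = star (star U *ᵥ x) ⬝ᵥ M *ᵥ (star U *ᵥ x) := by
        rw [star_mulVec, star_eq_conjTranspose, conjTranspose_conjTranspose]

lemma quad_diag {α : Type*} [Fintype α] [DecidableEq α] (d : α → ℝ) (x : α → ℂ) :
    star x ⬝ᵥ (diagonal (fun i => (d i : ℂ))) *ᵥ x
      = ((∑ i, d i * Complex.normSq (x i) : ℝ) : ℂ) := by
  push_cast
  simp only [dotProduct, mulVec_diagonal, Pi.star_apply, Complex.star_def]
  refine Finset.sum_congr rfl fun i _ => ?_
  rw [show (starRingEnd ℂ) (x i) * ((d i : ℂ) * x i)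
      = (d i : ℂ) * (x i * (starRingEnd ℂ) (x i)) by ring, Complex.mul_conj]

lemma dot_self {α : Type*} [Fintype α] (x : α → ℂ) :
    star x ⬝ᵥ x = ((∑ i, Complex.normSq (x i) : ℝ) : ℂ) := by
  push_cast
  simp only [dotProduct, Pi.star_apply, Complex.star_def]
  exact Finset.sum_congr rfl fun i _ => by rw [mul_comm, Complex.mul_conj]

lemma quad_smul {α : Type*} [Fintype α] (M : Matrix α α ℂ) (c : ℝ) (x : α → ℂ) :
    star ((c : ℂ) • x) ⬝ᵥ M *ᵥ ((c : ℂ) • x) = ((c ^ 2 : ℝ) : ℂ) * (star x ⬝ᵥ M *ᵥ x) := by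
  rw [mulVec_smul, dotProduct_smul, star_smul, smul_dotProduct]
  simp only [smul_eq_mul, Complex.star_def, Complex.conj_ofReal]
  push_cast
  ring

lemma convex_le_max {f : ℝ → ℝ} (hf : ConvexOn ℝ Set.univ f) {x y z : ℝ}
    (hxz : x ≤ z) (hzy : z ≤ y) : f z ≤ max (f x) (f y) := by
  rcases eq_or_lt_of_le (hxz.trans hzy) with h | h
  · have hzx : z = x := le_antisymm (h ▸ hzy) hxz
    simp [hzx, le_max_left]
  · set a := (y - z) / (y - x) with ha'
    set b := (z - x) / (y - x) with hb'
    have hyx : y - x ≠ 0 := by linarith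
    have hab : a + b = 1 := by rw [ha', hb', ← add_div, div_eq_one_iff_eq hyx]; ring
    have ha : 0 ≤ a := div_nonneg (by linarith) (by linarith)
    have hb : 0 ≤ b := div_nonneg (by linarith) (by linarith)
    have hz : a * x + b * y = z := by rw [ha', hb', div_mul_eq_mul_div, div_mul_eq_mul_div, ← add_div, div_eq_iff hyx]; ring
    have key := hf.2 (Set.mem_univ x) (Set.mem_univ y) ha hb hab
    simp only [smul_eq_mul] at key
    calc f z = f (a * x + b * y) := by rw [hz]
      _ ≤ a * f x + b * f y := key
      _ ≤ a * max (f x) (f y) + b * max (f x) (f y) := by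
          gcongr
          exacts [le_max_left _ _, le_max_right _ _]
      _ = max (f x) (f y) := by rw [← add_mul, hab, one_mul]

lemma monoOn {f : ℝ → ℝ} (hf : ConvexOn ℝ Set.univ f) {lo r hi : ℝ} (hlo : lo ≤ r)
    (hmin : ∀ t ∈ Set.Icc lo hi, f r ≤ f t) :
    MonotoneOn f (Set.Icc r hi) := by
  intro x hx y hy hxy
  have h1 : f x ≤ max (f r) (f y) := convex_le_max hf hx.1 hxy
  have h2 : f r ≤ f y := hmin y ⟨hlo.trans hy.1, hy.2⟩
  rwa [max_eq_right h2] at h1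

lemma antiOn {f : ℝ → ℝ} (hf : ConvexOn ℝ Set.univ f) {lo r hi : ℝ} (hhi : r ≤ hi)
    (hmin : ∀ t ∈ Set.Icc lo hi, f r ≤ f t) :
    AntitoneOn f (Set.Icc lo r) := by
  intro x hx y hy hxy
  have h1 : f y ≤ max (f x) (f r) := convex_le_max hf hxy hy.2
  have h2 : f r ≤ f x := hmin x ⟨hx.1, hx.2.trans hhi⟩
  rwa [max_eq_left h2] at h1


lemma ofReal_comp {n : ℕ} (g : Fin n → ℝ) :
    (RCLike.ofReal ∘ g : Fin n → ℂ) = fun i => ((g i : ℝ) : ℂ) := rfl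

lemma jensen {n : ℕ} {f : ℝ → ℝ} (hf : ConvexOn ℝ Set.univ f) {A : Matrix (Fin n) (Fin n) ℂ}
    (hA : A.IsHermitian) (x : Fin n → ℂ) (hx : ∑ i, Complex.normSq (x i) = 1) :
    f (Complex.re (star x ⬝ᵥ A *ᵥ x)) ≤ Complex.re (star x ⬝ᵥ (cfc f A) *ᵥ x) := by
  set U : Matrix (Fin n) (Fin n) ℂ := (hA.eigenvectorUnitary : Matrix (Fin n) (Fin n) ℂ) with hU
  have hUU : U * star U = 1 := (Matrix.mem_unitaryGroup_iff).mp hA.eigenvectorUnitary.2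
  set y := star U *ᵥ x with hy
  have hyn : ∑ i, Complex.normSq (y i) = 1 := by
    have h1 : star x ⬝ᵥ (U * 1 * star U) *ᵥ x = star y ⬝ᵥ (1 : Matrix (Fin n) (Fin n) ℂ) *ᵥ y :=
      quad_conj U 1 x
    rw [mul_one, hUU, one_mulVec, one_mulVec, dot_self, dot_self] at h1
    exact_mod_cast (Complex.ofReal_inj.mp h1).symm.trans hx
  have hquadA : star x ⬝ᵥ A *ᵥ x
      = ((∑ i, hA.eigenvalues i * Complex.normSq (y i) : ℝ) : ℂ) := by
    conv_lhs => rw [hA.spectral_theorem]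
    rw [Unitary.conjStarAlgAut_apply, quad_conj, ← hy, ofReal_comp, quad_diag]
  have hquadf : star x ⬝ᵥ (cfc f A) *ᵥ x
      = ((∑ i, f (hA.eigenvalues i) * Complex.normSq (y i) : ℝ) : ℂ) := by
    rw [hA.cfc_eq, Matrix.IsHermitian.cfc, Unitary.conjStarAlgAut_apply, quad_conj, ← hy]
    rw [show (RCLike.ofReal ∘ f ∘ hA.eigenvalues : Fin n → ℂ)
        = fun i => ((f (hA.eigenvalues i) : ℝ) : ℂ) from rfl, quad_diag]
  rw [hquadA, hquadf, Complex.ofReal_re, Complex.ofReal_re]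
  have key := hf.map_sum_le (t := Finset.univ) (w := fun i => Complex.normSq (y i))
    (p := fun i => hA.eigenvalues i) (fun i _ => Complex.normSq_nonneg _) hyn
    (fun i _ => Set.mem_univ _)
  simp only [smul_eq_mul] at key
  calc f (∑ i, hA.eigenvalues i * Complex.normSq (y i))
      = f (∑ i, Complex.normSq (y i) * hA.eigenvalues i) := by
        congr 1; exact Finset.sum_congr rfl fun i _ => mul_comm _ _
    _ ≤ ∑ i, Complex.normSq (y i) * f (hA.eigenvalues i) := key
    _ = ∑ i, f (hA.eigenvalues i) * Complex.normSq (y i) :=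
        Finset.sum_congr rfl fun i _ => mul_comm _ _


lemma hall_claim {ι : Type*} [Fintype ι] [DecidableEq ι] (N' : Matrix ι ι ℂ)
    (hN' : N'.IsHermitian) (t kf : ι → ℝ)
    (H : ∀ i0 : ι, ∀ x : ι → ℂ, (∀ i, x i ≠ 0 → kf i0 ≤ kf i) →
      t i0 * (∑ i, Complex.normSq (x i)) ≤ Complex.re (star x ⬝ᵥ N' *ᵥ x))
    (i0 : ι) :
    (Finset.univ.filter fun i => kf i0 ≤ kf i).card
      ≤ (Finset.univ.filter fun j => t i0 ≤ hN'.eigenvalues j).card := by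
  by_contra hc
  push_neg at hc
  set ν := hN'.eigenvalues with hν
  set U : Matrix ι ι ℂ := (hN'.eigenvectorUnitary : Matrix ι ι ℂ) with hU
  have hUU : U * star U = 1 := (Matrix.mem_unitaryGroup_iff).mp hN'.eigenvectorUnitary.2
  have hsUU : star U * U = 1 := (Matrix.mem_unitaryGroup_iff').mp hN'.eigenvectorUnitary.2
  set R := Finset.univ.filter (fun i => kf i0 ≤ kf i) with hR
  set B := Finset.univ.filter (fun j => t i0 ≤ ν j) with hB
  set Bc := Finset.univ.filter (fun j => ¬ (t i0 ≤ ν j)) with hBc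
  have hBBc : B.card + Bc.card = Fintype.card ι := by
    rw [hB, hBc, Finset.card_filter_add_card_filter_not, Finset.card_univ]
  -- linear algebra setup
  let Lmap : (ι → ℂ) →ₗ[ℂ] (ι → ℂ) := Matrix.mulVecLin U
  have hLker : LinearMap.ker Lmap = ⊥ := by
    rw [LinearMap.ker_eq_bot']
    intro v hv
    have h2 : star U *ᵥ (U *ᵥ v) = star U *ᵥ 0 := by
      rw [show U *ᵥ v = 0 from hv]
    rwa [mulVec_mulVec, hsUU, one_mulVec, mulVec_zero] at h2
  have hli : LinearIndependent ℂ (fun i : ι => Pi.single i (1 : ℂ)) := by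
    have h0 := (Pi.basisFun ℂ ι).linearIndependent
    rwa [show ⇑(Pi.basisFun ℂ ι) = fun i => Pi.single i (1 : ℂ) from
      funext fun i => by simp] at h0
  let b1 : {i // i ∈ R} → (ι → ℂ) := fun i => Pi.single (i : ι) 1
  let b1c : {j // j ∈ Bc} → (ι → ℂ) := fun j => Pi.single (j : ι) 1
  let b2 : {j // j ∈ Bc} → (ι → ℂ) := fun j => Lmap (Pi.single (j : ι) 1)
  have hli1 : LinearIndependent ℂ b1 := hli.comp Subtype.val Subtype.val_injective
  have hli1c : LinearIndependent ℂ b1c := hli.comp Subtype.val Subtype.val_injective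
  have hli2 : LinearIndependent ℂ b2 := hli1c.map' Lmap hLker
  set S1 := Submodule.span ℂ (Set.range b1) with hS1
  set S2 := Submodule.span ℂ (Set.range b2) with hS2
  have h1 : Module.finrank ℂ S1 = R.card := by
    rw [hS1, finrank_span_eq_card hli1, Fintype.card_coe]
  have h2 : Module.finrank ℂ S2 = Bc.card := by
    rw [hS2, finrank_span_eq_card hli2, Fintype.card_coe]
  have hsum : Module.finrank ℂ ↥(S1 ⊔ S2) + Module.finrank ℂ ↥(S1 ⊓ S2)
      = R.card + Bc.card := by
    rw [Submodule.finrank_sup_add_finrank_inf_eq, h1, h2]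
  have htop : Module.finrank ℂ ↥(S1 ⊔ S2) ≤ Fintype.card ι := by
    have := Submodule.finrank_le (S1 ⊔ S2)
    rwa [Module.finrank_pi] at this
  have hpos : 0 < Module.finrank ℂ ↥(S1 ⊓ S2) := by omega
  obtain ⟨x', hx'⟩ := Module.finrank_pos_iff_exists_ne_zero.mp hpos
  obtain ⟨x, hxmem, hx0⟩ : ∃ x ∈ S1 ⊓ S2, x ≠ 0 :=
    ⟨x'.val, x'.property, fun h => hx' (Subtype.ext h)⟩
  -- support of x
  let Z : Submodule ℂ (ι → ℂ) :=
  { carrier := {v | ∀ i, i ∉ R → v i = 0}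
    add_mem' := fun ha hb i hi => by
      simp only [Pi.add_apply, ha i hi, hb i hi, add_zero]
    zero_mem' := fun i _ => rfl
    smul_mem' := fun c v hv i hi => by
      simp only [Pi.smul_apply, hv i hi, smul_zero] }
  have hS1Z : S1 ≤ Z := by
    rw [hS1, Submodule.span_le]
    rintro _ ⟨j, rfl⟩ i hi
    exact Pi.single_eq_of_ne (fun h : i = (j : ι) => hi (h ▸ j.property)) 1
  have hsupp : ∀ i, x i ≠ 0 → i ∈ R := by
    intro i hxi
    by_contra hiR
    exact hxi (hS1Z hxmem.1 i hiR)
  -- x = U *ᵥ w with w supported in Bc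
  have hS2' : S2 = Submodule.map Lmap (Submodule.span ℂ (Set.range b1c)) := by
    rw [hS2, ← Submodule.span_image, ← Set.range_comp]
    rfl
  obtain ⟨w, hwmem, hxw⟩ : ∃ w ∈ Submodule.span ℂ (Set.range b1c), Lmap w = x := by
    have := hxmem.2
    rw [hS2'] at this
    exact this
  let Zc : Submodule ℂ (ι → ℂ) :=
  { carrier := {v | ∀ j, j ∉ Bc → v j = 0}
    add_mem' := fun ha hb j hj => by
      simp only [Pi.add_apply, ha j hj, hb j hj, add_zero]
    zero_mem' := fun j _ => rfl
    smul_mem' := fun c v hv j hj => by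
      simp only [Pi.smul_apply, hv j hj, smul_zero] }
  have hZc : ∀ j, j ∉ Bc → w j = 0 := by
    have hle : Submodule.span ℂ (Set.range b1c) ≤ Zc := by
      rw [Submodule.span_le]
      rintro _ ⟨j, rfl⟩ i hi
      exact Pi.single_eq_of_ne (fun h : i = (j : ι) => hi (h ▸ j.property)) 1
    exact fun j hj => hle hwmem j hj
  have hw0 : w ≠ 0 := by
    rintro rfl
    exact hx0 (hxw ▸ (map_zero Lmap))
  have hxUw : x = U *ᵥ w := by rw [← hxw]; rfl
  -- quadratic form computations
  have hwx : star U *ᵥ x = w := by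
    rw [hxUw, mulVec_mulVec, hsUU, one_mulVec]
  have hxq : star x ⬝ᵥ N' *ᵥ x = ((∑ j, ν j * Complex.normSq (w j) : ℝ) : ℂ) := by
    conv_lhs => rw [hN'.spectral_theorem]
    rw [Unitary.conjStarAlgAut_apply, quad_conj, hwx,
      show (RCLike.ofReal ∘ hN'.eigenvalues : ι → ℂ) = fun j => ((ν j : ℝ) : ℂ) from rfl,
      quad_diag]
  have hSxw : (∑ i, Complex.normSq (x i)) = ∑ j, Complex.normSq (w j) := by
    have h3 : star x ⬝ᵥ (U * 1 * star U) *ᵥ x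
        = star (star U *ᵥ x) ⬝ᵥ (1 : Matrix ι ι ℂ) *ᵥ (star U *ᵥ x) := quad_conj U 1 x
    rw [mul_one, hUU, one_mulVec, one_mulVec, hwx, dot_self, dot_self] at h3
    exact_mod_cast h3
  -- upper bound
  obtain ⟨j0, hj0⟩ : ∃ j, w j ≠ 0 := Function.ne_iff.mp hw0
  have hupper : (∑ j, ν j * Complex.normSq (w j)) < t i0 * ∑ j, Complex.normSq (w j) := by
    rw [Finset.mul_sum]
    refine Finset.sum_lt_sum (fun j _ => ?_) ⟨j0, Finset.mem_univ _, ?_⟩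
    · by_cases hwj : w j = 0
      · simp [hwj]
      · have hj : j ∈ Bc := by
          by_contra hjBc
          exact hwj (hZc j hjBc)
        have : ν j < t i0 := by
          rw [hBc, Finset.mem_filter] at hj
          exact lt_of_not_ge hj.2
        exact mul_le_mul_of_nonneg_right this.le (Complex.normSq_nonneg _)
    · have hj : j0 ∈ Bc := by
        by_contra hjBc
        exact hj0 (hZc j0 hjBc)
      have : ν j0 < t i0 := by
        rw [hBc, Finset.mem_filter] at hj
        exact lt_of_not_ge hj.2
      exact mul_lt_mul_of_pos_right this (Complex.normSq_pos.mpr hj0)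
  -- lower bound
  have hlower := H i0 x (fun i hxi => by
    have := hsupp i hxi
    rw [hR, Finset.mem_filter] at this
    exact this.2)
  rw [hxq, Complex.ofReal_re, hSxw] at hlower
  exact absurd (hlower.trans_lt hupper) (lt_irrefl _)

lemma key_perm {ι : Type*} [Fintype ι] [DecidableEq ι] (N' : Matrix ι ι ℂ)
    (hN' : N'.IsHermitian) (t kf : ι → ℝ)
    (H : ∀ i0 : ι, ∀ x : ι → ℂ, (∀ i, x i ≠ 0 → kf i0 ≤ kf i) →
      t i0 * (∑ i, Complex.normSq (x i)) ≤ Complex.re (star x ⬝ᵥ N' *ᵥ x)) :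
    ∃ π : Equiv.Perm ι, ∀ i, t i ≤ hN'.eigenvalues (π i) := by
  classical
  have hall : ∀ s : Finset ι,
      s.card ≤ (s.biUnion fun i => Finset.univ.filter fun j => t i ≤ hN'.eigenvalues j).card := by
    intro s
    rcases s.eq_empty_or_nonempty with rfl | hs
    · simp
    obtain ⟨i0, hi0s, hi0min⟩ := s.exists_min_image kf hs
    have hsub : s ⊆ Finset.univ.filter fun i => kf i0 ≤ kf i := by
      intro i hi
      exact Finset.mem_filter.mpr ⟨Finset.mem_univ _, hi0min i hi⟩
    calc s.card ≤ (Finset.univ.filter fun i => kf i0 ≤ kf i).card := Finset.card_le_card hsub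
      _ ≤ (Finset.univ.filter fun j => t i0 ≤ hN'.eigenvalues j).card :=
          hall_claim N' hN' t kf H i0
      _ ≤ _ := Finset.card_le_card (Finset.subset_biUnion_of_mem (fun i => Finset.univ.filter fun j => t i ≤ hN'.eigenvalues j) hi0s)
  obtain ⟨g, hginj, hg⟩ :=
    (Finset.all_card_le_biUnion_card_iff_exists_injective
      (fun i => Finset.univ.filter fun j => t i ≤ hN'.eigenvalues j)).mp hall
  refine ⟨Equiv.ofBijective g (Finite.injective_iff_bijective.mp hginj), fun i => ?_⟩
  have := hg i
  rw [Finset.mem_filter] at this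
  exact this.2


lemma quad_ext {n : ℕ} (p : Fin n → Prop) [DecidablePred p] (N : Matrix (Fin n) (Fin n) ℂ)
    (x : {i // p i} → ℂ) :
    star (fun i => if h : p i then x ⟨i, h⟩ else 0) ⬝ᵥ
        N *ᵥ (fun i => if h : p i then x ⟨i, h⟩ else 0)
      = star x ⬝ᵥ (N.submatrix (Subtype.val : {i // p i} → Fin n) Subtype.val) *ᵥ x := by
  set e : Fin n → ℂ := fun i => if h : p i then x ⟨i, h⟩ else 0 with he
  have hmv : ∀ i : {i // p i},
      (N *ᵥ e) ↑i = (N.submatrix (Subtype.val : {i // p i} → Fin n) Subtype.val *ᵥ x) i := by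
    intro i
    show (∑ k, N ↑i k * e k) = ∑ k, (N.submatrix Subtype.val Subtype.val) i k * x k
    rw [sum_split p (fun k => N ↑i k * e k)]
    have h2 : (∑ k : {x // ¬ p x}, N ↑i ↑k * e ↑k) = 0 :=
      Finset.sum_eq_zero fun k _ => by simp [he, k.property]
    rw [h2, add_zero]
    refine Finset.sum_congr rfl fun k _ => ?_
    simp [he, k.property, submatrix_apply]
  show (∑ i, star (e i) * (N *ᵥ e) i) = ∑ i, star (x i) * _
  rw [sum_split p (fun i => star (e i) * (N *ᵥ e) i)]
  have h3 : (∑ i : {x // ¬ p x}, star (e ↑i) * (N *ᵥ e) ↑i) = 0 :=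
    Finset.sum_eq_zero fun i _ => by simp [he, i.property]
  rw [h3, add_zero]
  refine Finset.sum_congr rfl fun i _ => ?_
  rw [hmv i]
  congr 1
  simp [he, i.property]

lemma sum_weight_ext {n : ℕ} (p : Fin n → Prop) [DecidablePred p] (φ : Fin n → ℝ)
    (x : {i // p i} → ℂ) :
    (∑ i, φ i * Complex.normSq ((if h : p i then x ⟨i, h⟩ else 0 : ℂ)))
      = ∑ i : {i // p i}, φ ↑i * Complex.normSq (x i) := by
  rw [sum_split p (fun i => φ i * Complex.normSq ((if h : p i then x ⟨i, h⟩ else 0 : ℂ)))]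
  have h2 : (∑ i : {x // ¬ p x},
      φ ↑i * Complex.normSq ((if h : p ↑i then x ⟨↑i, h⟩ else 0 : ℂ))) = 0 :=
    Finset.sum_eq_zero fun i _ => by simp [i.property]
  rw [h2, add_zero]
  exact Finset.sum_congr rfl fun i _ => by simp [i.property]

lemma block_diag {n : ℕ} (p : Fin n → Prop) [DecidablePred p] (N : Matrix (Fin n) (Fin n) ℂ)
    (hNE : (N.submatrix (Subtype.val : {i // p i} → Fin n) Subtype.val).IsHermitian)
    (hNF : (N.submatrix (Subtype.val : {i // ¬ p i} → Fin n) Subtype.val).IsHermitian)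
    (hmix : ∀ i j, ¬ (p i ↔ p j) → N i j = 0) :
    ∃ Q : Matrix (Fin n) (Fin n) ℂ, Q ∈ Matrix.unitaryGroup (Fin n) ℂ ∧
      star Q * N * Q = diagonal (fun j =>
        if h : p j then ((hNE.eigenvalues ⟨j, h⟩ : ℝ) : ℂ)
        else ((hNF.eigenvalues ⟨j, h⟩ : ℝ) : ℂ)) := by
  set UE : Matrix {i // p i} {i // p i} ℂ := ((hNE.eigenvectorUnitary : Matrix.unitaryGroup {i // p i} ℂ) : Matrix {i // p i} {i // p i} ℂ) with hUE
  set UF : Matrix {i // ¬ p i} {i // ¬ p i} ℂ := ((hNF.eigenvectorUnitary : Matrix.unitaryGroup {i // ¬ p i} ℂ) : Matrix {i // ¬ p i} {i // ¬ p i} ℂ) with hUF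
  have hUEU : UE * star UE = 1 := (Matrix.mem_unitaryGroup_iff).mp hNE.eigenvectorUnitary.2
  have hUFU : UF * star UF = 1 := (Matrix.mem_unitaryGroup_iff).mp hNF.eigenvectorUnitary.2
  have hsUEU : star UE * UE = 1 := (Matrix.mem_unitaryGroup_iff').mp hNE.eigenvectorUnitary.2
  have hsUFU : star UF * UF = 1 := (Matrix.mem_unitaryGroup_iff').mp hNF.eigenvectorUnitary.2
  set Q : Matrix (Fin n) (Fin n) ℂ := Matrix.of (fun i j =>
    if hi : p i then (if hj : p j then UE ⟨i, hi⟩ ⟨j, hj⟩ else 0)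
    else (if hj : p j then 0 else UF ⟨i, hi⟩ ⟨j, hj⟩)) with hQdef
  have hQapp : ∀ i j, Q i j =
      if hi : p i then (if hj : p j then UE ⟨i, hi⟩ ⟨j, hj⟩ else 0)
      else (if hj : p j then 0 else UF ⟨i, hi⟩ ⟨j, hj⟩) := fun i j => rfl
  have hQQ : Q * star Q = 1 := by
    ext i j
    rw [Matrix.mul_apply, sum_split p (fun k => Q i k * (star Q) k j)]
    by_cases hi : p i <;> by_cases hj : p j
    · have h1 : (∑ k : {x // p x}, Q i ↑k * (star Q) ↑k j) = (UE * star UE) ⟨i, hi⟩ ⟨j, hj⟩ := by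
        rw [Matrix.mul_apply]
        refine Finset.sum_congr rfl fun k _ => ?_
        rw [Matrix.star_apply, Matrix.star_apply, hQapp, hQapp]
        simp [hi, hj, k.property]
      have h2 : (∑ k : {x // ¬ p x}, Q i ↑k * (star Q) ↑k j) = 0 :=
        Finset.sum_eq_zero fun k _ => by rw [hQapp]; simp [hi, k.property]
      rw [h1, h2, add_zero, hUEU]
      by_cases h : i = j
      · subst h; simp [Matrix.one_apply]
      · rw [Matrix.one_apply_ne (fun hc => h (congrArg Subtype.val hc)),
          Matrix.one_apply_ne h]
    · have h1 : (∑ k : {x // p x}, Q i ↑k * (star Q) ↑k j) = 0 :=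
        Finset.sum_eq_zero fun k _ => by
          rw [Matrix.star_apply, hQapp j ↑k]; simp [hj, k.property]
      have h2 : (∑ k : {x // ¬ p x}, Q i ↑k * (star Q) ↑k j) = 0 :=
        Finset.sum_eq_zero fun k _ => by rw [hQapp i ↑k]; simp [hi, k.property]
      rw [h1, h2, add_zero, Matrix.one_apply_ne (fun hc : i = j => hj (hc ▸ hi))]
    · have h1 : (∑ k : {x // p x}, Q i ↑k * (star Q) ↑k j) = 0 :=
        Finset.sum_eq_zero fun k _ => by rw [hQapp i ↑k]; simp [hi, k.property]
      have h2 : (∑ k : {x // ¬ p x}, Q i ↑k * (star Q) ↑k j) = 0 :=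
        Finset.sum_eq_zero fun k _ => by
          rw [Matrix.star_apply, hQapp j ↑k]; simp [hj, k.property]
      rw [h1, h2, add_zero, Matrix.one_apply_ne (fun hc : i = j => hi (hc ▸ hj))]
    · have h1 : (∑ k : {x // p x}, Q i ↑k * (star Q) ↑k j) = 0 :=
        Finset.sum_eq_zero fun k _ => by rw [hQapp i ↑k]; simp [hi, k.property]
      have h2 : (∑ k : {x // ¬ p x}, Q i ↑k * (star Q) ↑k j) = (UF * star UF) ⟨i, hi⟩ ⟨j, hj⟩ := by
        rw [Matrix.mul_apply]
        refine Finset.sum_congr rfl fun k _ => ?_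
        rw [Matrix.star_apply, Matrix.star_apply, hQapp, hQapp]
        simp [hi, hj, k.property]
      rw [h1, h2, zero_add, hUFU]
      by_cases h : i = j
      · subst h; simp [Matrix.one_apply]
      · rw [Matrix.one_apply_ne (fun hc => h (congrArg Subtype.val hc)), Matrix.one_apply_ne h]
  have hQmem : Q ∈ Matrix.unitaryGroup (Fin n) ℂ := (Matrix.mem_unitaryGroup_iff).mpr hQQ
  have hsQQ : star Q * Q = 1 := (Matrix.mem_unitaryGroup_iff').mp hQmem
  set κc : Fin n → ℂ := fun j =>
    if h : p j then ((hNE.eigenvalues ⟨j, h⟩ : ℝ) : ℂ) else ((hNF.eigenvalues ⟨j, h⟩ : ℝ) : ℂ)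
    with hκc
  have hNEU : N.submatrix (Subtype.val : {i // p i} → Fin n) Subtype.val * UE
      = UE * diagonal (RCLike.ofReal ∘ hNE.eigenvalues) := by
    conv_lhs => rw [hNE.spectral_theorem]
    rw [Unitary.conjStarAlgAut_apply, mul_assoc, hsUEU, mul_one]
  have hNFU : N.submatrix (Subtype.val : {i // ¬ p i} → Fin n) Subtype.val * UF
      = UF * diagonal (RCLike.ofReal ∘ hNF.eigenvalues) := by
    conv_lhs => rw [hNF.spectral_theorem]
    rw [Unitary.conjStarAlgAut_apply, mul_assoc, hsUFU, mul_one]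
  have hNQ : N * Q = Q * diagonal κc := by
    ext i j
    rw [Matrix.mul_apply, Matrix.mul_diagonal, sum_split p (fun k => N i k * Q k j)]
    by_cases hj : p j
    · have h2 : (∑ k : {x // ¬ p x}, N i ↑k * Q ↑k j) = 0 :=
        Finset.sum_eq_zero fun k _ => by rw [hQapp ↑k j]; simp [hj, k.property]
      rw [h2, add_zero]
      by_cases hi : p i
      · have h1 : (∑ k : {x // p x}, N i ↑k * Q ↑k j)
            = (N.submatrix (Subtype.val : {i // p i} → Fin n) Subtype.val * UE
                : Matrix {i // p i} {i // p i} ℂ) ⟨i, hi⟩ ⟨j, hj⟩ := by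
          rw [Matrix.mul_apply]
          refine Finset.sum_congr rfl fun k _ => ?_
          rw [hQapp ↑k j]
          simp [k.property, hj, submatrix_apply]
        rw [h1, hNEU, Matrix.mul_diagonal, hQapp i j]
        simp [hi, hj, hκc]
      · have h1 : (∑ k : {x // p x}, N i ↑k * Q ↑k j) = 0 :=
          Finset.sum_eq_zero fun k _ => by
            rw [hmix i ↑k (fun hc => hi (hc.mpr k.property)), zero_mul]
        rw [h1, hQapp i j]
        simp [hi, hj]
    · have h2 : (∑ k : {x // p x}, N i ↑k * Q ↑k j) = 0 :=
        Finset.sum_eq_zero fun k _ => by rw [hQapp ↑k j]; simp [hj, k.property]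
      rw [h2, zero_add]
      by_cases hi : p i
      · have h1 : (∑ k : {x // ¬ p x}, N i ↑k * Q ↑k j) = 0 :=
          Finset.sum_eq_zero fun k _ => by
            rw [hmix i ↑k (fun hc => k.property (hc.mp hi)), zero_mul]
        rw [h1, hQapp i j]
        simp [hi, hj]
      · have h1 : (∑ k : {x // ¬ p x}, N i ↑k * Q ↑k j)
            = (N.submatrix (Subtype.val : {i // ¬ p i} → Fin n) Subtype.val * UF
                : Matrix {i // ¬ p i} {i // ¬ p i} ℂ) ⟨i, hi⟩ ⟨j, hj⟩ := by
          rw [Matrix.mul_apply]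
          refine Finset.sum_congr rfl fun k _ => ?_
          rw [hQapp ↑k j]
          simp [k.property, hj, submatrix_apply]
        rw [h1, hNFU, Matrix.mul_diagonal, hQapp i j]
        simp [hi, hj, hκc]
  refine ⟨Q, hQmem, ?_⟩
  rw [mul_assoc, hNQ, ← mul_assoc, hsQQ, one_mul]


lemma quad_conj' {α : Type*} [Fintype α] (W M : Matrix α α ℂ) (z : α → ℂ) :
    star z ⬝ᵥ (star W * M * W) *ᵥ z = star (W *ᵥ z) ⬝ᵥ M *ᵥ (W *ᵥ z) := by
  have h := quad_conj (star W) M z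
  rwa [star_star] at h

lemma sum_normSq_mulVec {α : Type*} [Fintype α] [DecidableEq α] (W : Matrix α α ℂ) (hW : star W * W = 1)
    (z : α → ℂ) :
    ∑ i, Complex.normSq ((W *ᵥ z) i) = ∑ i, Complex.normSq (z i) := by
  have h1 := quad_conj' W 1 z
  rw [mul_one, hW, one_mulVec, one_mulVec, dot_self, dot_self] at h1
  exact_mod_cast h1.symm


end TU

open TU in
/-- Result 1.6: for convex `f : ℝ → ℝ` and Hermitians `A`, `B`, with
`X = f((A+B)/2)` and `Y = (f(A)+f(B))/2`, there exist unitaries `U`, `V` such that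
`X ≤ (U Y Uᴴ + V Y Vᴴ)/2` in the Loewner order. -/
theorem exists_two_unitaries_cfc_midpoint_le {n : ℕ} (hn : 1 ≤ n) (f : ℝ → ℝ)
    (hf : ConvexOn ℝ Set.univ f)
    (A B : Matrix (Fin n) (Fin n) ℂ) (hA : A.IsHermitian) (hB : B.IsHermitian)
    (X Y : Matrix (Fin n) (Fin n) ℂ)
    (hX : X = cfc f ((2 : ℂ)⁻¹ • (A + B)))
    (hY : Y = (2 : ℂ)⁻¹ • (cfc f A + cfc f B)) :
    ∃ U ∈ Matrix.unitaryGroup (Fin n) ℂ, ∃ V ∈ Matrix.unitaryGroup (Fin n) ℂ,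
      ((2 : ℂ)⁻¹ • (U * Y * Uᴴ + V * Y * Vᴴ) - X).PosSemidef := by
  classical
  have h2sa : star ((2 : ℂ)⁻¹) = (2 : ℂ)⁻¹ := by simp
  set C : Matrix (Fin n) (Fin n) ℂ := (2 : ℂ)⁻¹ • (A + B) with hC_def
  have hC : C.IsHermitian := by
    show Cᴴ = C
    rw [hC_def, conjTranspose_smul, conjTranspose_add, hA.eq, hB.eq, h2sa]
  set W0 : Matrix (Fin n) (Fin n) ℂ :=
    ((hC.eigenvectorUnitary : Matrix.unitaryGroup (Fin n) ℂ) : Matrix (Fin n) (Fin n) ℂ)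
    with hW0_def
  set μ : Fin n → ℝ := hC.eigenvalues with hμ_def
  have hW0mem : W0 ∈ Matrix.unitaryGroup (Fin n) ℂ := hC.eigenvectorUnitary.2
  have hW0U : W0 * star W0 = 1 := (Matrix.mem_unitaryGroup_iff).mp hW0mem
  have hsW0 : star W0 * W0 = 1 := (Matrix.mem_unitaryGroup_iff').mp hW0mem
  -- X in diagonalized form
  have hX' : X = W0 * diagonal (fun i => ((f (μ i) : ℝ) : ℂ)) * star W0 := by
    rw [hX, hC.cfc_eq f, Matrix.IsHermitian.cfc, hW0_def]
    rfl
  -- interval and minimizer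
  have hne : (Finset.univ : Finset (Fin n)).Nonempty := ⟨⟨0, hn⟩, Finset.mem_univ _⟩
  set lo : ℝ := Finset.univ.inf' hne μ with hlo_def
  set hi : ℝ := Finset.univ.sup' hne μ with hhi_def
  have hμmem : ∀ i, μ i ∈ Set.Icc lo hi := fun i =>
    ⟨Finset.inf'_le _ (Finset.mem_univ i), Finset.le_sup' μ (Finset.mem_univ i)⟩
  have hlohi : lo ≤ hi := (hμmem ⟨0, hn⟩).1.trans (hμmem ⟨0, hn⟩).2
  have hfc : ContinuousOn f (Set.Icc lo hi) :=
    (hf.continuousOn isOpen_univ).mono (Set.subset_univ _)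
  obtain ⟨r, hrmem, hrmin'⟩ :=
    isCompact_Icc.exists_isMinOn (Set.nonempty_Icc.mpr hlohi) hfc
  have hrmin : ∀ t ∈ Set.Icc lo hi, f r ≤ f t := fun t ht => hrmin' ht
  have hmono : MonotoneOn f (Set.Icc r hi) := monoOn hf hrmem.1 hrmin
  have hanti : AntitoneOn f (Set.Icc lo r) := antiOn hf hrmem.2 hrmin
  set p : Fin n → Prop := fun i => μ i ≤ r with hp_def
  -- M, J, N
  set M : Matrix (Fin n) (Fin n) ℂ := star W0 * Y * W0 with hM_def
  set ε : Fin n → ℂ := fun i => if p i then 1 else -1 with hε_def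
  set J : Matrix (Fin n) (Fin n) ℂ := diagonal ε with hJ_def
  have hεstar : star ε = ε := by
    funext i
    rw [hε_def]
    simp only [Pi.star_apply]
    by_cases h : p i <;> simp [h]
  have hJstar : star J = J := by
    rw [hJ_def, star_eq_conjTranspose, diagonal_conjTranspose, hεstar]
  have hJJ : J * J = 1 := by
    rw [hJ_def, diagonal_mul_diagonal]
    rw [show (fun i => ε i * ε i) = fun _ => (1 : ℂ) from funext fun i => by
      by_cases h : p i <;> simp [hε_def, h]]
    exact diagonal_one
  have hJmem : J ∈ Matrix.unitaryGroup (Fin n) ℂ := by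
    rw [Matrix.mem_unitaryGroup_iff, hJstar, hJJ]
  set N : Matrix (Fin n) (Fin n) ℂ := (2 : ℂ)⁻¹ • (M + J * M * J) with hN_def
  -- Hermitian facts
  have hY' : Y.IsHermitian := by
    rw [hY]
    have h1 : IsSelfAdjoint (cfc f A) := cfc_predicate f A
    have h2 : IsSelfAdjoint (cfc f B) := cfc_predicate f B
    have h3 : IsSelfAdjoint ((2 : ℂ)⁻¹) := h2sa
    exact h3.smul (h1.add h2)
  have hM : M.IsHermitian := by
    show Mᴴ = M
    rw [hM_def, ← star_eq_conjTranspose]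
    simp only [Matrix.star_mul, star_star, hY'.isSelfAdjoint.star_eq, mul_assoc]
  have hN : N.IsHermitian := by
    show Nᴴ = N
    rw [hN_def, ← star_eq_conjTranspose]
    simp only [star_smul, star_add, Matrix.star_mul, star_star, hM.isSelfAdjoint.star_eq, hJstar,
      h2sa, mul_assoc]
  have hNsubE : (N.submatrix (Subtype.val : {i // p i} → Fin n) Subtype.val).IsHermitian :=
    hN.submatrix _
  have hNsubF : (N.submatrix (Subtype.val : {i // ¬ p i} → Fin n) Subtype.val).IsHermitian :=
    hN.submatrix _
  -- quadratic form property for M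
  have hsplitC : ∀ (P R : Matrix (Fin n) (Fin n) ℂ) (v : Fin n → ℂ),
      Complex.re (star v ⬝ᵥ ((2 : ℂ)⁻¹ • (P + R)) *ᵥ v)
        = 2⁻¹ * Complex.re (star v ⬝ᵥ P *ᵥ v) + 2⁻¹ * Complex.re (star v ⬝ᵥ R *ᵥ v) := by
    intro P R v
    rw [smul_mulVec, dotProduct_smul, add_mulVec, dotProduct_add]
    rw [show ((2 : ℂ)⁻¹) = (((2 : ℝ)⁻¹ : ℝ) : ℂ) from by norm_num]
    rw [smul_eq_mul, Complex.re_ofReal_mul, Complex.add_re]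
    ring
  have hPM : ∀ z : Fin n → ℂ, (∑ i, Complex.normSq (z i)) = 1 →
      f (∑ i, μ i * Complex.normSq (z i)) ≤ Complex.re (star z ⬝ᵥ M *ᵥ z) := by
    intro z hz
    have hvn : ∑ i, Complex.normSq ((W0 *ᵥ z) i) = 1 := by
      rw [sum_normSq_mulVec W0 hsW0 z, hz]
    have hdiagC : star W0 * C * W0 = diagonal (fun i => ((μ i : ℝ) : ℂ)) :=
      by have h := hC.conjStarAlgAut_star_eigenvectorUnitary; rw [Unitary.conjStarAlgAut_apply, Unitary.coe_star, star_star] at h; exact h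
    have hqC : ∑ i, μ i * Complex.normSq (z i)
        = Complex.re (star (W0 *ᵥ z) ⬝ᵥ C *ᵥ (W0 *ᵥ z)) := by
      rw [← quad_conj' W0 C z, hdiagC, quad_diag, Complex.ofReal_re]
    have hCsplit : Complex.re (star (W0 *ᵥ z) ⬝ᵥ C *ᵥ (W0 *ᵥ z))
        = 2⁻¹ * Complex.re (star (W0 *ᵥ z) ⬝ᵥ A *ᵥ (W0 *ᵥ z))
          + 2⁻¹ * Complex.re (star (W0 *ᵥ z) ⬝ᵥ B *ᵥ (W0 *ᵥ z)) := by
      rw [hC_def]; exact hsplitC A B (W0 *ᵥ z)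
    have hquadM : Complex.re (star z ⬝ᵥ M *ᵥ z)
        = 2⁻¹ * Complex.re (star (W0 *ᵥ z) ⬝ᵥ (cfc f A) *ᵥ (W0 *ᵥ z))
          + 2⁻¹ * Complex.re (star (W0 *ᵥ z) ⬝ᵥ (cfc f B) *ᵥ (W0 *ᵥ z)) := by
      rw [hM_def, quad_conj' W0 Y z, hY]
      exact hsplitC _ _ (W0 *ᵥ z)
    have hJA := jensen hf hA (W0 *ᵥ z) hvn
    have hJB := jensen hf hB (W0 *ᵥ z) hvn
    have hmid := hf.2 (Set.mem_univ (Complex.re (star (W0 *ᵥ z) ⬝ᵥ A *ᵥ (W0 *ᵥ z))))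
      (Set.mem_univ (Complex.re (star (W0 *ᵥ z) ⬝ᵥ B *ᵥ (W0 *ᵥ z))))
      (by norm_num : (0:ℝ) ≤ 2⁻¹) (by norm_num : (0:ℝ) ≤ 2⁻¹) (by norm_num)
    simp only [smul_eq_mul] at hmid
    rw [hqC, hCsplit, hquadM]
    calc f (2⁻¹ * Complex.re (star (W0 *ᵥ z) ⬝ᵥ A *ᵥ (W0 *ᵥ z))
          + 2⁻¹ * Complex.re (star (W0 *ᵥ z) ⬝ᵥ B *ᵥ (W0 *ᵥ z)))
        ≤ 2⁻¹ * f (Complex.re (star (W0 *ᵥ z) ⬝ᵥ A *ᵥ (W0 *ᵥ z)))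
          + 2⁻¹ * f (Complex.re (star (W0 *ᵥ z) ⬝ᵥ B *ᵥ (W0 *ᵥ z))) := hmid
      _ ≤ 2⁻¹ * Complex.re (star (W0 *ᵥ z) ⬝ᵥ (cfc f A) *ᵥ (W0 *ᵥ z))
          + 2⁻¹ * Complex.re (star (W0 *ᵥ z) ⬝ᵥ (cfc f B) *ᵥ (W0 *ᵥ z)) := by
          have ha := mul_le_mul_of_nonneg_left hJA (by norm_num : (0:ℝ) ≤ 2⁻¹)
          have hb := mul_le_mul_of_nonneg_left hJB (by norm_num : (0:ℝ) ≤ 2⁻¹)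
          linarith
  -- quadratic form property for N
  have hPN : ∀ z : Fin n → ℂ, (∑ i, Complex.normSq (z i)) = 1 →
      f (∑ i, μ i * Complex.normSq (z i)) ≤ Complex.re (star z ⬝ᵥ N *ᵥ z) := by
    intro z hz
    have hJz : ∀ i, Complex.normSq ((J *ᵥ z) i) = Complex.normSq (z i) := by
      intro i
      rw [hJ_def, mulVec_diagonal]
      by_cases h : p i <;> simp [hε_def, h, Complex.normSq_mul]
    have hz' : ∑ i, Complex.normSq ((J *ᵥ z) i) = 1 := by
      rw [Finset.sum_congr rfl fun i _ => hJz i]; exact hz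
    have hμz' : ∑ i, μ i * Complex.normSq ((J *ᵥ z) i) = ∑ i, μ i * Complex.normSq (z i) :=
      Finset.sum_congr rfl fun i _ => by rw [hJz i]
    have h1 := hPM z hz
    have h2 := hPM (J *ᵥ z) hz'
    rw [hμz'] at h2
    have hJMJ : star z ⬝ᵥ (J * M * J) *ᵥ z = star (J *ᵥ z) ⬝ᵥ M *ᵥ (J *ᵥ z) := by
      have h3 := quad_conj' J M z
      rwa [hJstar] at h3
    have hNq : Complex.re (star z ⬝ᵥ N *ᵥ z)
        = 2⁻¹ * Complex.re (star z ⬝ᵥ M *ᵥ z)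
          + 2⁻¹ * Complex.re (star (J *ᵥ z) ⬝ᵥ M *ᵥ (J *ᵥ z)) := by
      rw [hN_def, hsplitC M (J * M * J) z, hJMJ]
    rw [hNq]
    linarith
  -- the H hypotheses for the two blocks
  have hgen : ∀ (q : Fin n → Prop) (_ : DecidablePred q), ∀ i0 : {i // q i}, ∀ x : {i // q i} → ℂ,
      (∀ i : {i // q i}, x i ≠ 0 → (∑ j : {i // q i}, μ ↑j * Complex.normSq (x j))
          = (∑ j : {i // q i}, μ ↑j * Complex.normSq (x j))) → True := fun _ _ _ _ _ => trivial
  clear hgen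
  have hHblock : ∀ (q : Fin n → Prop) (inst : DecidablePred q) (i0 : {i // q i})
      (x : {i // q i} → ℂ),
      (μ ↑i0 ∈ Set.Icc r hi ∧ (∀ i : {i // q i}, x i ≠ 0 → μ ↑i0 ≤ μ ↑i)) ∨
      (μ ↑i0 ∈ Set.Icc lo r ∧ (∀ i : {i // q i}, x i ≠ 0 → μ ↑i ≤ μ ↑i0)) →
      f (μ ↑i0) * (∑ i, Complex.normSq (x i)) ≤
        Complex.re (star x ⬝ᵥ (N.submatrix (Subtype.val : {i // q i} → Fin n) Subtype.val) *ᵥ x)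
      := by
    intro q inst i0 x hcase
    set S : ℝ := ∑ i, Complex.normSq (x i) with hS_def
    have hSnn : 0 ≤ S := Finset.sum_nonneg fun i _ => Complex.normSq_nonneg _
    rcases eq_or_lt_of_le hSnn with hS0 | hSpos
    · have hx0 : x = 0 := by
        funext i
        exact Complex.normSq_eq_zero.mp
          ((Finset.sum_eq_zero_iff_of_nonneg fun i _ => Complex.normSq_nonneg (x i)).mp
            hS0.symm i (Finset.mem_univ _))
      rw [hx0, ← hS0]
      simp
    · set e : Fin n → ℂ := fun i => if h : q i then x ⟨i, h⟩ else 0 with he_def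
      set c : ℝ := (Real.sqrt S)⁻¹ with hc_def
      have hc2 : c ^ 2 = S⁻¹ := by
        rw [hc_def, inv_pow, Real.sq_sqrt hSpos.le]
      set z : Fin n → ℂ := (c : ℂ) • e with hz_def
      have hsum_e : ∑ i, Complex.normSq (e i) = S := by
        have h4 := sum_weight_ext q (fun _ => (1:ℝ)) x
        simpa [he_def] using h4
      have hnormSq_z : ∀ i, Complex.normSq (z i) = c ^ 2 * Complex.normSq (e i) := by
        intro i
        rw [hz_def, Pi.smul_apply, smul_eq_mul, Complex.normSq_mul, Complex.normSq_ofReal]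
        ring
      have hsum_z : ∑ i, Complex.normSq (z i) = 1 := by
        rw [Finset.sum_congr rfl fun i _ => hnormSq_z i, ← Finset.mul_sum, hsum_e, hc2,
          inv_mul_cancel₀ (ne_of_gt hSpos)]
      set T : ℝ := ∑ i : {i // q i}, μ ↑i * Complex.normSq (x i) with hT_def
      have hμsum_z : ∑ i, μ i * Complex.normSq (z i) = S⁻¹ * T := by
        rw [Finset.sum_congr rfl fun i _ => by rw [hnormSq_z i]]
        rw [show (∑ i, μ i * (c ^ 2 * Complex.normSq (e i)))
            = c ^ 2 * ∑ i, μ i * Complex.normSq (e i) from by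
          rw [Finset.mul_sum]; exact Finset.sum_congr rfl fun i _ => by ring]
        rw [sum_weight_ext q μ x, hc2, hT_def]
      have hThigh : T ≤ hi * S := by
        rw [hT_def, hS_def, Finset.mul_sum]
        exact Finset.sum_le_sum fun i _ =>
          mul_le_mul_of_nonneg_right (hμmem ↑i).2 (Complex.normSq_nonneg _)
      have hTlow : lo * S ≤ T := by
        rw [hT_def, hS_def, Finset.mul_sum]
        exact Finset.sum_le_sum fun i _ =>
          mul_le_mul_of_nonneg_right (hμmem ↑i).1 (Complex.normSq_nonneg _)
      have havg_hi : S⁻¹ * T ≤ hi := by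
        rw [inv_mul_eq_div, div_le_iff₀ hSpos]
        linarith
      have havg_lo : lo ≤ S⁻¹ * T := by
        rw [inv_mul_eq_div, le_div_iff₀ hSpos]
        linarith
      -- the two monotonicity cases
      have hkey : f (μ ↑i0) ≤ f (S⁻¹ * T) := by
        rcases hcase with ⟨hi0mem, hsupp⟩ | ⟨hi0mem, hsupp⟩
        · -- monotone case : μ i0 ≤ avg
          have hTlow' : μ ↑i0 * S ≤ T := by
            rw [hT_def, hS_def, Finset.mul_sum]
            refine Finset.sum_le_sum fun i _ => ?_
            by_cases hxi : x i = 0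
            · simp [hxi]
            · exact mul_le_mul_of_nonneg_right (hsupp i hxi) (Complex.normSq_nonneg _)
          have havg_ge : μ ↑i0 ≤ S⁻¹ * T := by
            rw [inv_mul_eq_div, le_div_iff₀ hSpos]
            linarith
          exact hmono hi0mem ⟨hi0mem.1.trans havg_ge, havg_hi⟩ havg_ge
        · -- antitone case : avg ≤ μ i0
          have hThigh' : T ≤ μ ↑i0 * S := by
            rw [hT_def, hS_def, Finset.mul_sum]
            refine Finset.sum_le_sum fun i _ => ?_
            by_cases hxi : x i = 0
            · simp [hxi]
            · exact mul_le_mul_of_nonneg_right (hsupp i hxi) (Complex.normSq_nonneg _)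
          have havg_le : S⁻¹ * T ≤ μ ↑i0 := by
            rw [inv_mul_eq_div, div_le_iff₀ hSpos]
            linarith
          exact hanti ⟨havg_lo, havg_le.trans hi0mem.2⟩ hi0mem havg_le
      have hPNz := hPN z hsum_z
      rw [hμsum_z] at hPNz
      have hquad_z : Complex.re (star z ⬝ᵥ N *ᵥ z)
          = S⁻¹ * Complex.re (star x ⬝ᵥ
              (N.submatrix (Subtype.val : {i // q i} → Fin n) Subtype.val) *ᵥ x) := by
        rw [hz_def, he_def, quad_smul, hc2]
        rw [Complex.re_ofReal_mul]
        congr 1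
        rw [← quad_ext q N x]
      rw [hquad_z] at hPNz
      have h5 := hkey.trans hPNz
      calc f (μ ↑i0) * S
          ≤ (S⁻¹ * Complex.re (star x ⬝ᵥ
              (N.submatrix (Subtype.val : {i // q i} → Fin n) Subtype.val) *ᵥ x)) * S :=
            mul_le_mul_of_nonneg_right h5 hSpos.le
        _ = _ := by field_simp
  -- apply key_perm to the two blocks
  obtain ⟨πE, hπE⟩ := key_perm
    (N.submatrix (Subtype.val : {i // p i} → Fin n) Subtype.val) hNsubE
    (fun i => f (μ ↑i)) (fun i => - μ ↑i)
    (by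
      intro i0 x hsupp
      refine hHblock p _ i0 x (Or.inr ⟨⟨(hμmem ↑i0).1, i0.property⟩, fun i hxi => ?_⟩)
      exact neg_le_neg_iff.mp (hsupp i hxi))
  obtain ⟨πF, hπF⟩ := key_perm
    (N.submatrix (Subtype.val : {i // ¬ p i} → Fin n) Subtype.val) hNsubF
    (fun i => f (μ ↑i)) (fun i => μ ↑i)
    (by
      intro i0 x hsupp
      refine hHblock (fun i => ¬ p i) _ i0 x
        (Or.inl ⟨⟨le_of_lt (lt_of_not_ge i0.property), (hμmem ↑i0).2⟩, hsupp⟩))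
  -- block diagonalization
  have hmix : ∀ i j, ¬ (p i ↔ p j) → N i j = 0 := by
    intro i j hij
    have hJMJ_entry : (J * M * J) i j = ε i * M i j * ε j := by
      rw [hJ_def, Matrix.mul_diagonal, Matrix.diagonal_mul]
    rw [hN_def, Matrix.smul_apply, Matrix.add_apply, hJMJ_entry]
    by_cases hic : p i
    · have hjc : ¬ p j := fun h => hij ⟨fun _ => h, fun _ => hic⟩
      simp [hε_def, hic, hjc]
    · have hjc : p j := by
        by_contra hjc
        exact hij ⟨fun h => absurd h hic, fun h => absurd h hjc⟩
      simp [hε_def, hic, hjc]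
  obtain ⟨Q, hQmem, hQdiag⟩ := block_diag p N hNsubE hNsubF hmix
  have hsQQ : star Q * Q = 1 := (Matrix.mem_unitaryGroup_iff').mp hQmem
  -- the permutation and matched eigenvalues
  set g : Equiv.Perm (Fin n) := Equiv.Perm.subtypeCongr πE πF with hg_def
  set κ : Fin n → ℝ := fun j =>
    if h : p j then hNsubE.eigenvalues ⟨j, h⟩ else hNsubF.eigenvalues ⟨j, h⟩ with hκ_def
  have hκc_eq : (fun j => if h : p j then ((hNsubE.eigenvalues ⟨j, h⟩ : ℝ) : ℂ)
      else ((hNsubF.eigenvalues ⟨j, h⟩ : ℝ) : ℂ)) = fun j => ((κ j : ℝ) : ℂ) := by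
    funext j
    rw [hκ_def]
    by_cases h : p j <;> simp [h]
  rw [hκc_eq] at hQdiag
  have hmatch : ∀ i, f (μ i) ≤ κ (g i) := by
    intro i
    by_cases hic : p i
    · rw [hg_def, Equiv.Perm.subtypeCongr.left_apply _ _ hic]
      have hgp : p ↑(πE ⟨i, hic⟩) := (πE ⟨i, hic⟩).property
      have h6 : κ ↑(πE ⟨i, hic⟩) = hNsubE.eigenvalues (πE ⟨i, hic⟩) := by
        rw [hκ_def]
        simp only [hgp, dif_pos, Subtype.coe_eta]
      rw [h6]
      exact hπE ⟨i, hic⟩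
    · rw [hg_def, Equiv.Perm.subtypeCongr.right_apply _ _ hic]
      have hgp : ¬ p ↑(πF ⟨i, hic⟩) := (πF ⟨i, hic⟩).property
      have h6 : κ ↑(πF ⟨i, hic⟩) = hNsubF.eigenvalues (πF ⟨i, hic⟩) := by
        rw [hκ_def]
        simp only [hgp, dif_neg, Subtype.coe_eta, dite_false]
      rw [h6]
      exact hπF ⟨i, hic⟩
  -- the final unitary
  set Wf : Matrix (Fin n) (Fin n) ℂ := (star Q).submatrix ⇑g _root_.id with hWf_def
  have hWfstar : star Wf = Q.submatrix _root_.id ⇑g := by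
    rw [hWf_def, star_eq_conjTranspose, conjTranspose_submatrix, ← star_eq_conjTranspose,
      star_star]
  have hWfN : Wf * N * star Wf = diagonal (fun i => ((κ (g i) : ℝ) : ℂ)) := by
    rw [hWfstar, hWf_def]
    have h7 : (star Q).submatrix ⇑g _root_.id * N = ((star Q) * N).submatrix ⇑g _root_.id := by
      have h8 := submatrix_mul_equiv (star Q) N ⇑g (Equiv.refl (Fin n)) _root_.id
      simpa using h8
    rw [h7]
    have h9 : ((star Q) * N).submatrix ⇑g _root_.id * Q.submatrix _root_.id ⇑g
        = ((star Q) * N * Q).submatrix ⇑g ⇑g := by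
      have h10 := submatrix_mul_equiv (star Q * N) Q ⇑g (Equiv.refl (Fin n)) ⇑g
      simpa using h10
    rw [h9, hQdiag, submatrix_diagonal_equiv]
    rfl
  have hWfmem : Wf ∈ Matrix.unitaryGroup (Fin n) ℂ := by
    rw [Matrix.mem_unitaryGroup_iff]
    rw [hWfstar, hWf_def]
    have h10 := submatrix_mul_equiv (star Q) Q ⇑g (Equiv.refl (Fin n)) ⇑g
    have h11 : (star Q).submatrix ⇑g _root_.id * Q.submatrix _root_.id ⇑g
        = ((star Q) * Q).submatrix ⇑g ⇑g := by simpa using h10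
    rw [h11, hsQQ, submatrix_one_equiv]
  -- assemble
  refine ⟨W0 * Wf * star W0, ?_, W0 * (Wf * J) * star W0, ?_, ?_⟩
  · exact mul_mem (mul_mem hW0mem hWfmem) (Unitary.star_mem hW0mem)
  · exact mul_mem (mul_mem hW0mem (mul_mem hWfmem hJmem)) (Unitary.star_mem hW0mem)
  have hgoal_eq : (2 : ℂ)⁻¹ • ((W0 * Wf * star W0) * Y * (W0 * Wf * star W0)ᴴ
        + (W0 * (Wf * J) * star W0) * Y * (W0 * (Wf * J) * star W0)ᴴ) - X
      = W0 * (diagonal (fun i => ((κ (g i) - f (μ i) : ℝ) : ℂ))) * W0ᴴ := by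
    have e1 : (W0 * Wf * star W0) * Y * (W0 * Wf * star W0)ᴴ
        = W0 * (Wf * M * star Wf) * star W0 := by
      rw [← star_eq_conjTranspose]
      simp only [Matrix.star_mul, star_star, hM_def, Matrix.mul_assoc]
    have e2 : (W0 * (Wf * J) * star W0) * Y * (W0 * (Wf * J) * star W0)ᴴ
        = W0 * (Wf * (J * M * J) * star Wf) * star W0 := by
      rw [← star_eq_conjTranspose]
      simp only [Matrix.star_mul, star_star, hJstar, hM_def, Matrix.mul_assoc]
    rw [e1, e2, hX']
    have e3 : (2 : ℂ)⁻¹ • (W0 * (Wf * M * star Wf) * star W0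
          + W0 * (Wf * (J * M * J) * star Wf) * star W0)
        = W0 * diagonal (fun i => ((κ (g i) : ℝ) : ℂ)) * star W0 := by
      rw [← hWfN, hN_def]
      simp only [Matrix.smul_mul, Matrix.mul_smul, Matrix.mul_add, Matrix.add_mul, smul_add,
        Matrix.mul_assoc]
    rw [e3, ← star_eq_conjTranspose]
    rw [← Matrix.sub_mul, ← Matrix.mul_sub, diagonal_sub]
    congr 1
    congr 1
    funext i
    push_cast
    ring
  rw [hgoal_eq]
  refine PosSemidef.mul_mul_conjTranspose_same ?_ W0
  refine Matrix.posSemidef_diagonal_iff.mpr fun i => ?_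
  rw [Complex.zero_le_real]
  linarith [hmatch i]
end

section
/- Let n ≥ 1, let f : [0,∞) → ℝ be a convex function with f(0) ≤ 0, and let A, B be n×n positive semidefinite complex matrices. Then Tr f(A+B) ≥ Tr f(A) + Tr f(B). (The reverse Rotfel'd trace inequality for convex functions.) -/
open Matrix ComplexOrder

open Polynomial

set_option maxHeartbeats 1000000
set_option linter.unusedSectionVars false
set_option linter.unusedVariables false
set_option linter.unusedTactic false


variable {m R : Type*} [Fintype m] [DecidableEq m] [CommRing R]

lemma my_charpoly_eq_of_mul_eq (G H E : Matrix m m R) (hE : IsUnit E.det)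
    (h : G * E = E * H) : G.charpoly = H.charpoly := by
  have key : charmatrix G * E.map C = E.map C * charmatrix H := by
    have h' : (C : R →+* R[X]).mapMatrix G * (C : R →+* R[X]).mapMatrix E
        = (C : R →+* R[X]).mapMatrix E * (C : R →+* R[X]).mapMatrix H := by
      rw [← _root_.map_mul, ← _root_.map_mul, h]
    unfold charmatrix
    rw [sub_mul, mul_sub, scalar_commute X (fun r => Commute.all _ _) (E.map C)]
    rw [RingHom.mapMatrix_apply, RingHom.mapMatrix_apply, RingHom.mapMatrix_apply] at h'
    rw [RingHom.mapMatrix_apply, RingHom.mapMatrix_apply, h']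
  have hdet := congrArg det key
  rw [det_mul, det_mul] at hdet
  have hu : IsUnit (E.map (C : R →+* R[X])).det := by
    rw [← RingHom.mapMatrix_apply, ← RingHom.map_det]
    exact hE.map _
  rw [Matrix.charpoly, Matrix.charpoly]
  rw [mul_comm] at hdet
  exact hu.mul_left_cancel (by rw [hdet])

variable [IsDomain R]

lemma my_charpoly_mul_comm (S T : Matrix m m R) :
    (S * T).charpoly = (T * S).charpoly := by
  have key : (fromBlocks (S * T) 0 T (0 : Matrix m m R)) * (fromBlocks 1 S 0 1)
      = (fromBlocks 1 S 0 1) * (fromBlocks 0 0 T (T * S)) := by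
    simp [Matrix.fromBlocks_multiply, mul_assoc]
  have hdet : IsUnit (fromBlocks (1 : Matrix m m R) S 0 1).det := by
    rw [det_fromBlocks_zero₂₁]
    simp
  have := my_charpoly_eq_of_mul_eq _ _ _ hdet key
  rw [charpoly_fromBlocks_zero₁₂, charpoly_fromBlocks_zero₁₂] at this
  have h0 : (0 : Matrix m m R).charpoly ≠ 0 := (charpoly_monic _).ne_zero
  rw [mul_comm] at this
  exact mul_left_cancel₀ h0 this

lemma my_charpoly_diagonal (d : m → R) :
    (diagonal d).charpoly = ∏ i, (X - C (d i)) := by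
  have : charmatrix (diagonal d) = diagonal (fun i => X - C (d i)) := by
    ext i j
    by_cases h : i = j
    · subst h; simp
    · simp [h, diagonal_apply_ne _ h]
  rw [Matrix.charpoly, this, det_diagonal]

lemma my_charpoly_hermitian {H : Matrix m m ℂ} (hH : H.IsHermitian) :
    H.charpoly = ∏ i, (X - C ((hH.eigenvalues i : ℂ))) := by
  set U : Matrix m m ℂ := (hH.eigenvectorUnitary : Matrix m m ℂ) with hU
  have hUnit : star U * U = 1 := Unitary.coe_star_mul_self hH.eigenvectorUnitary
  have key : H * U = U * diagonal (RCLike.ofReal ∘ hH.eigenvalues) := by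
    conv_lhs => rw [hH.spectral_theorem, Unitary.conjStarAlgAut_apply]
    rw [mul_assoc, mul_assoc, (Matrix.mem_unitaryGroup_iff'.mp hH.eigenvectorUnitary.2)]
    simp [mul_assoc]
    rfl
  have hdet : IsUnit U.det := by
    have := congrArg det hUnit
    rw [det_mul, det_one, mul_comm] at this
    exact IsUnit.of_mul_eq_one _ this
  have := my_charpoly_eq_of_mul_eq _ _ _ hdet key
  rw [this, my_charpoly_diagonal]
  rfl

lemma my_charpoly_zero' (n' : Type*) [Fintype n'] [DecidableEq n'] :
    (0 : Matrix n' n' ℂ).charpoly = X ^ (Fintype.card n') := by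
  rw [← diagonal_zero, my_charpoly_diagonal]
  simp

lemma my_sum_eigs {k n' : Type*} [Fintype k] [DecidableEq k] [Fintype n'] [DecidableEq n']
    {M : Matrix k k ℂ} {Cm : Matrix n' n' ℂ} (hM : M.IsHermitian) (hC : Cm.IsHermitian)
    (hcp : M.charpoly = Cm.charpoly * (0 : Matrix n' n' ℂ).charpoly)
    (f : ℝ → ℝ) :
    ∑ l, f (hM.eigenvalues l) = ∑ i, f (hC.eigenvalues i) + (Fintype.card n') * f 0 := by
  classical
  set g1 : k → ℂ := fun l => (hM.eigenvalues l : ℂ)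
  set g2 : n' → ℂ := fun i => (hC.eigenvalues i : ℂ)
  have e1 : M.charpoly.roots = Finset.univ.val.map g1 := by
    have hmm : Multiset.map (fun i => X - C (g1 i)) Finset.univ.val
        = Multiset.map (fun a => X - C a) (Multiset.map g1 Finset.univ.val) := by
      simp [Multiset.map_map]
    rw [my_charpoly_hermitian hM, Finset.prod_eq_multiset_prod, hmm,
      roots_multiset_prod_X_sub_C]
  have e2 : Cm.charpoly.roots = Finset.univ.val.map g2 := by
    have hmm : Multiset.map (fun i => X - C (g2 i)) Finset.univ.val
        = Multiset.map (fun a => X - C a) (Multiset.map g2 Finset.univ.val) := by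
      simp [Multiset.map_map]
    rw [my_charpoly_hermitian hC, Finset.prod_eq_multiset_prod, hmm,
      roots_multiset_prod_X_sub_C]
  have hroots : M.charpoly.roots
      = Finset.univ.val.map g2 + Multiset.replicate (Fintype.card n') 0 := by
    rw [hcp, roots_mul (mul_ne_zero (charpoly_monic _).ne_zero (charpoly_monic _).ne_zero),
      e2, my_charpoly_zero', roots_pow, roots_X, Multiset.nsmul_singleton]
  have hms : Finset.univ.val.map g1
      = Finset.univ.val.map g2 + Multiset.replicate (Fintype.card n') 0 := by
    rw [← e1, hroots]
  have := congrArg (fun s : Multiset ℂ => (s.map (fun z => f z.re)).sum) hms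
  simp only [Multiset.map_add, Multiset.sum_add, Multiset.map_map, Multiset.map_replicate,
    Multiset.sum_replicate, Function.comp_def] at this
  simp only [g1, g2, Complex.ofReal_re] at this
  rw [Finset.sum_eq_multiset_sum, this, Finset.sum_eq_multiset_sum]
  simp [nsmul_eq_mul]

lemma my_trace_cfc {k : Type*} [Fintype k] [DecidableEq k] {M : Matrix k k ℂ}
    (hM : M.IsHermitian) (f : ℝ → ℝ) :
    (cfc f M).trace = ((∑ i, f (hM.eigenvalues i) : ℝ) : ℂ) := by
  rw [hM.cfc_eq, Matrix.IsHermitian.cfc, Unitary.conjStarAlgAut_apply, trace_mul_comm, ← mul_assoc,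
    Unitary.coe_star_mul_self, one_mul, trace_diagonal]
  push_cast
  rfl

lemma my_peierls {k : Type*} [Fintype k] [DecidableEq k] {M V : Matrix k k ℂ}
    (hM : M.PosSemidef) {f : ℝ → ℝ} (hf : ConvexOn ℝ (Set.Ici (0 : ℝ)) f)
    (h1 : star V * V = 1) (h2 : V * star V = 1) :
    ∑ j, f (((star V * M * V) j j).re) ≤ ∑ l, f (hM.1.eigenvalues l) := by
  classical
  set μ : k → ℝ := hM.1.eigenvalues with hμ
  set U : Matrix k k ℂ := (hM.1.eigenvectorUnitary : Matrix k k ℂ) with hU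
  have hU1 : star U * U = 1 := Unitary.coe_star_mul_self hM.1.eigenvectorUnitary
  have hU2 : U * star U = 1 := Unitary.coe_mul_star_self hM.1.eigenvectorUnitary
  set Q : Matrix k k ℂ := star U * V with hQ
  have hsQ : star Q = star V * U := by rw [hQ, StarMul.star_mul, star_star]
  have hQ1 : star Q * Q = 1 := by
    rw [hsQ, hQ, mul_assoc, ← mul_assoc U, hU2, one_mul, h1]
  have hQ2 : Q * star Q = 1 := by
    rw [hsQ, hQ, mul_assoc, ← mul_assoc V, h2, one_mul, hU1]
  set w : k → k → ℝ := fun l j => Complex.normSq (Q l j) with hw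
  have hterm : ∀ l j : k, (starRingEnd ℂ) (Q l j) * Q l j = ((w l j : ℝ) : ℂ) := by
    intro l j
    rw [mul_comm, hw]
    exact Complex.mul_conj (Q l j)
  have hform : star V * M * V = star Q * (diagonal (RCLike.ofReal ∘ μ) * Q) := by
    rw [hsQ]
    conv_lhs => rw [hM.1.spectral_theorem, Unitary.conjStarAlgAut_apply]
    simp only [hQ, mul_assoc, hμ, hU]
  have hentry : ∀ j, ((star V * M * V) j j).re = ∑ l, w l j * μ l := by
    intro j
    rw [hform, mul_apply]
    have : ∀ l, (star Q) j l * ((diagonal (RCLike.ofReal ∘ μ) * Q : Matrix k k ℂ) l j)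
        = ((μ l * w l j : ℝ) : ℂ) := by
      intro l
      rw [diagonal_mul, star_apply, RCLike.star_def]
      push_cast
      rw [mul_left_comm, hterm l j]
      simp only [Function.comp_apply]
      push_cast
      rfl
    rw [Finset.sum_congr rfl fun l _ => this l, ← Complex.ofReal_sum]
    rw [Complex.ofReal_re]
    exact Finset.sum_congr rfl fun l _ => mul_comm _ _
  have hw_nonneg : ∀ l j, 0 ≤ w l j := fun l j => Complex.normSq_nonneg _
  have hw_col : ∀ j, ∑ l, w l j = 1 := by
    intro j
    have h := congrFun (congrFun hQ1 j) j
    rw [mul_apply, one_apply_eq] at h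
    have : ∀ l, (star Q) j l * Q l j = ((w l j : ℝ) : ℂ) := by
      intro l
      rw [star_apply, RCLike.star_def]
      exact hterm l j
    rw [Finset.sum_congr rfl fun l _ => this l, ← Complex.ofReal_sum] at h
    exact_mod_cast h
  have hw_row : ∀ l, ∑ j, w l j = 1 := by
    intro l
    have h := congrFun (congrFun hQ2 l) l
    rw [mul_apply, one_apply_eq] at h
    have : ∀ j, Q l j * (star Q) j l = ((w l j : ℝ) : ℂ) := by
      intro j
      rw [star_apply, RCLike.star_def, mul_comm]
      exact hterm l j
    rw [Finset.sum_congr rfl fun j _ => this j, ← Complex.ofReal_sum] at h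
    exact_mod_cast h
  have hμ_mem : ∀ l, μ l ∈ Set.Ici (0 : ℝ) := fun l => hM.eigenvalues_nonneg l
  have jensen : ∀ j, f (∑ l, w l j * μ l) ≤ ∑ l, w l j * f (μ l) := by
    intro j
    have := hf.map_sum_le (t := Finset.univ) (w := fun l => w l j) (p := μ)
      (fun l _ => hw_nonneg l j) (hw_col j) (fun l _ => hμ_mem l)
    simpa [smul_eq_mul] using this
  calc ∑ j, f (((star V * M * V) j j).re)
      = ∑ j, f (∑ l, w l j * μ l) := by
        exact Finset.sum_congr rfl fun j _ => by rw [hentry j]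
    _ ≤ ∑ j, ∑ l, w l j * f (μ l) := Finset.sum_le_sum fun j _ => jensen j
    _ = ∑ l, (∑ j, w l j) * f (μ l) := by
        rw [Finset.sum_comm]
        exact Finset.sum_congr rfl fun l _ => by rw [Finset.sum_mul]
    _ = ∑ l, f (μ l) := Finset.sum_congr rfl fun l _ => by rw [hw_row l, one_mul]

/-- Reverse Rotfel'd trace inequality: for convex `f : [0,∞) → ℝ` with `f(0) ≤ 0` and
`A, B ≥ 0`, `Tr f(A+B) ≥ Tr f(A) + Tr f(B)`. -/
theorem trace_cfc_add_ge_of_convex {n : ℕ} (hn : 1 ≤ n) (f : ℝ → ℝ)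
    (hf : ConvexOn ℝ (Set.Ici (0 : ℝ)) f) (hf0 : f 0 ≤ 0)
    (A B : Matrix (Fin n) (Fin n) ℂ) (hA : A.PosSemidef) (hB : B.PosSemidef) :
    Matrix.trace (cfc f A) + Matrix.trace (cfc f B) ≤ Matrix.trace (cfc f (A + B)) := by
  classical
  set sA := cfc Real.sqrt A with hsAdef
  set sB := cfc Real.sqrt B with hsBdef
  have hsA : sA.IsHermitian := cfc_predicate Real.sqrt A
  have hsB : sB.IsHermitian := cfc_predicate Real.sqrt B
  have hsAA : sA * sA = A := by
    rw [hsAdef, ← cfc_mul Real.sqrt Real.sqrt A]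
    conv_rhs => rw [← cfc_id ℝ A hA.1]
    apply cfc_congr
    intro x hx
    rw [hA.1.spectrum_real_eq_range_eigenvalues] at hx
    obtain ⟨i, rfl⟩ := hx
    exact Real.mul_self_sqrt (hA.eigenvalues_nonneg i)
  have hsBB : sB * sB = B := by
    rw [hsBdef, ← cfc_mul Real.sqrt Real.sqrt B]
    conv_rhs => rw [← cfc_id ℝ B hB.1]
    apply cfc_congr
    intro x hx
    rw [hB.1.spectrum_real_eq_range_eigenvalues] at hx
    obtain ⟨i, rfl⟩ := hx
    exact Real.mul_self_sqrt (hB.eigenvalues_nonneg i)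
  set T : Matrix (Fin n ⊕ Fin n) (Fin n ⊕ Fin n) ℂ := fromBlocks sA 0 sB 0 with hT
  have hTstar : star T = fromBlocks sA sB 0 0 := by
    rw [hT, star_eq_conjTranspose, fromBlocks_conjTranspose, conjTranspose_zero, hsA, hsB]
  set M : Matrix (Fin n ⊕ Fin n) (Fin n ⊕ Fin n) ℂ := T * star T with hMdef
  have hM : M.PosSemidef := by
    rw [hMdef, star_eq_conjTranspose]
    exact posSemidef_self_mul_conjTranspose T
  have hMblocks : M = fromBlocks A (sA * sB) (sB * sA) B := by
    rw [hMdef, hTstar, hT, fromBlocks_multiply]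
    simp [hsAA, hsBB]
  have hC : (A + B).PosSemidef := hA.add hB
  have hN : star T * T = fromBlocks (A + B) 0 0 0 := by
    rw [hTstar, hT, fromBlocks_multiply]
    simp [hsAA, hsBB]
  have hcp : M.charpoly = (A + B).charpoly * (0 : Matrix (Fin n) (Fin n) ℂ).charpoly := by
    rw [hMdef, my_charpoly_mul_comm T (star T), hN, ← charpoly_fromBlocks_zero₁₂]
  have hsum : (∑ l, f (hM.1.eigenvalues l))
      = (∑ i, f (hC.1.eigenvalues i)) + n * f 0 := by
    have := my_sum_eigs hM.1 hC.1 hcp f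
    rwa [Fintype.card_fin] at this
  -- the unitary V
  set UA : Matrix (Fin n) (Fin n) ℂ := (hA.1.eigenvectorUnitary : Matrix (Fin n) (Fin n) ℂ)
    with hUA
  set UB : Matrix (Fin n) (Fin n) ℂ := (hB.1.eigenvectorUnitary : Matrix (Fin n) (Fin n) ℂ)
    with hUB
  set V : Matrix (Fin n ⊕ Fin n) (Fin n ⊕ Fin n) ℂ := fromBlocks UA 0 0 UB with hV
  have hVstar : star V = fromBlocks (star UA) 0 0 (star UB) := by
    rw [hV, star_eq_conjTranspose, fromBlocks_conjTranspose, conjTranspose_zero,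
      ← star_eq_conjTranspose, ← star_eq_conjTranspose]
  have hUA1 : star UA * UA = 1 := Unitary.coe_star_mul_self hA.1.eigenvectorUnitary
  have hUB1 : star UB * UB = 1 := Unitary.coe_star_mul_self hB.1.eigenvectorUnitary
  have hUA2 : UA * star UA = 1 := Unitary.coe_mul_star_self hA.1.eigenvectorUnitary
  have hUB2 : UB * star UB = 1 := Unitary.coe_mul_star_self hB.1.eigenvectorUnitary
  have hV1 : star V * V = 1 := by
    rw [hVstar, hV, fromBlocks_multiply]
    simp [hUA1, hUB1, ← fromBlocks_one]
  have hV2 : V * star V = 1 := by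
    rw [hVstar, hV, fromBlocks_multiply]
    simp [hUA2, hUB2, ← fromBlocks_one]
  have hblock : star V * M * V
      = fromBlocks (diagonal (RCLike.ofReal ∘ hA.1.eigenvalues)) (star UA * (sA * sB) * UB)
          (star UB * (sB * sA) * UA) (diagonal (RCLike.ofReal ∘ hB.1.eigenvalues)) := by
    rw [hMblocks, hVstar, hV, fromBlocks_multiply, fromBlocks_multiply]
    have hdA : star UA * A * UA = diagonal (RCLike.ofReal ∘ hA.1.eigenvalues) := by
      conv_lhs => rw [hA.1.spectral_theorem, Unitary.conjStarAlgAut_apply]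
      simp only [mul_assoc]
      rw [hUA1, mul_one, ← mul_assoc, hUA1, one_mul]
    have hdB : star UB * B * UB = diagonal (RCLike.ofReal ∘ hB.1.eigenvalues) := by
      conv_lhs => rw [hB.1.spectral_theorem, Unitary.conjStarAlgAut_apply]
      simp only [mul_assoc]
      rw [hUB1, mul_one, ← mul_assoc, hUB1, one_mul]
    rw [← hdA, ← hdB]
    simp [Matrix.mul_zero, Matrix.zero_mul]
  have hdiagsum : (∑ j, f (((star V * M * V) j j).re))
      = (∑ i, f (hA.1.eigenvalues i)) + ∑ i, f (hB.1.eigenvalues i) := by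
    rw [Fintype.sum_sum_type]
    congr 1
    · refine Finset.sum_congr rfl fun i _ => ?_
      rw [hblock]
      simp [fromBlocks_apply₁₁, diagonal_apply_eq]
    · refine Finset.sum_congr rfl fun i _ => ?_
      rw [hblock]
      simp [fromBlocks_apply₂₂, diagonal_apply_eq]
  have hpei := my_peierls hM hf hV1 hV2
  rw [hdiagsum, hsum] at hpei
  have hfin : (∑ i, f (hA.1.eigenvalues i)) + (∑ i, f (hB.1.eigenvalues i))
      ≤ ∑ i, f (hC.1.eigenvalues i) := by
    have hnf : (n : ℝ) * f 0 ≤ 0 :=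
      mul_nonpos_of_nonneg_of_nonpos (Nat.cast_nonneg n) hf0
    linarith
  rw [my_trace_cfc hA.1 f, my_trace_cfc hB.1 f, my_trace_cfc hC.1 f, ← Complex.ofReal_add]
  exact_mod_cast hfin
end

section
/- Let n ≥ 1, let p > 1 be a real number, and let A, B be n×n positive semidefinite complex matrices. Then Tr (A+B)^p ≥ Tr A^p + Tr B^p. (McCarthy's inequality.) -/
open Finset in
lemma holder_key {n : ℕ} (p : ℝ) (hp : 1 < p) (lam t : Fin n → ℝ)
    (hlam : ∀ i, 0 ≤ lam i) (ht : ∀ i, 0 ≤ t i) (htsum : ∑ i, t i = 1)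
    (μ : ℝ) (hμ : 0 ≤ μ)
    (ha2 : ∀ i, μ * t i ^ 2 ≤ lam i * t i)
    (hmuh : μ * (∑ i ∈ univ.filter (fun i => lam i ≠ 0), t i / lam i) ^ 2 ≤
      ∑ i ∈ univ.filter (fun i => lam i ≠ 0), t i / lam i) :
    μ ^ p ≤ μ * ∑ i, t i * lam i ^ (p - 1) := by
  have hp0 : (0:ℝ) < p := by linarith
  rcases eq_or_lt_of_le hμ with h0 | hμpos
  · rw [← h0, Real.zero_rpow hp0.ne', zero_mul]
  have hzero : ∀ i, lam i = 0 → t i = 0 := fun i hl => by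
    have h := ha2 i
    rw [hl, zero_mul] at h
    by_contra hne
    have htpos : 0 < t i := lt_of_le_of_ne (ht i) (Ne.symm hne)
    have : 0 < μ * t i ^ 2 := by positivity
    linarith
  set s := univ.filter (fun i : Fin n => lam i ≠ 0) with hs
  set h := ∑ i ∈ s, t i / lam i with hh
  have hlam_pos : ∀ i ∈ s, 0 < lam i := by
    intro i hi
    rw [hs, mem_filter] at hi
    exact lt_of_le_of_ne (hlam i) (Ne.symm hi.2)
  have hhnn : 0 ≤ h := Finset.sum_nonneg fun i hi => div_nonneg (ht i) (hlam_pos i hi).le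
  have hts : ∑ i ∈ s, t i = 1 := by
    rw [← htsum, hs, Finset.sum_filter]
    refine Finset.sum_congr rfl fun i _ => ?_
    by_cases hl : lam i = 0
    · simp [hl, hzero i hl]
    · simp [hl]
  have hhpos : 0 < h := by
    rcases eq_or_lt_of_le hhnn with h0 | h0
    · exfalso
      have h1 : ∀ i ∈ s, t i / lam i = 0 :=
        (Finset.sum_eq_zero_iff_of_nonneg
          (fun i hi => div_nonneg (ht i) (hlam_pos i hi).le)).mp h0.symm
      have h2 : ∑ i ∈ s, t i = 0 := Finset.sum_eq_zero fun i hi => by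
        have h3 := h1 i hi
        have hl := hlam_pos i hi
        field_simp at h3
        simpa using h3
      rw [hts] at h2; norm_num at h2
    · exact h0
  have hμh : μ * h ≤ 1 := by nlinarith
  -- Hölder
  have hq := Real.HolderConjugate.conjExponent hp
  set q := Real.conjExponent p with hqdef
  have hq1 : q⁻¹ = 1 - p⁻¹ := by
    have := hq.inv_add_inv_eq_one; linarith
  have hqpos : 0 < q := hq.symm.pos
  set f : Fin n → ℝ := fun i => (t i * lam i ^ (p - 1)) ^ p⁻¹ with hf
  set g : Fin n → ℝ := fun i => (t i / lam i) ^ q⁻¹ with hg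
  have hfnn : ∀ i, 0 ≤ f i := fun i => Real.rpow_nonneg
    (mul_nonneg (ht i) (Real.rpow_nonneg (hlam i) _)) _
  have hgnn : ∀ i, 0 ≤ g i := fun i => Real.rpow_nonneg
    (div_nonneg (ht i) (hlam i)) _
  have key : ∀ i ∈ s, f i * g i = t i := by
    intro i hi
    have hl := hlam_pos i hi
    rw [hf, hg]
    simp only
    rw [Real.mul_rpow (ht i) (Real.rpow_nonneg (hlam i) _),
      Real.div_rpow (ht i) (hlam i)]
    have ha : (lam i ^ (p - 1)) ^ p⁻¹ = lam i ^ q⁻¹ := by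
      rw [← Real.rpow_mul (hlam i)]
      congr 1
      rw [hq1]
      field_simp
    have hb : lam i ^ q⁻¹ ≠ 0 := (Real.rpow_pos_of_pos hl _).ne'
    rw [ha]
    rw [div_eq_mul_inv, mul_comm (t i ^ q⁻¹), mul_assoc, ← mul_assoc (lam i ^ q⁻¹),
      mul_inv_cancel₀ hb, one_mul, ← Real.rpow_add_of_nonneg (ht i) (by positivity)
        (inv_nonneg.mpr hqpos.le),
      hq.inv_add_inv_eq_one, Real.rpow_one]
  have holder := Real.inner_le_Lp_mul_Lq s f g hq
  have hfp : ∀ i ∈ s, |f i| ^ p = t i * lam i ^ (p - 1) := fun i hi => by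
    rw [abs_of_nonneg (hfnn i), hf]
    exact Real.rpow_inv_rpow (mul_nonneg (ht i) (Real.rpow_nonneg (hlam i) _)) hp0.ne'
  have hgq : ∀ i ∈ s, |g i| ^ q = t i / lam i := fun i hi => by
    rw [abs_of_nonneg (hgnn i), hg]
    exact Real.rpow_inv_rpow (div_nonneg (ht i) (hlam i)) hqpos.ne'
  set S := ∑ i ∈ s, t i * lam i ^ (p - 1) with hS
  have hSnn : 0 ≤ S := Finset.sum_nonneg fun i _ =>
    mul_nonneg (ht i) (Real.rpow_nonneg (hlam i) _)
  have h1 : (1:ℝ) ≤ S ^ (1/p) * h ^ (1/q) := by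
    calc (1:ℝ) = ∑ i ∈ s, t i := hts.symm
      _ = ∑ i ∈ s, f i * g i :=
          (Finset.sum_congr rfl fun i hi => (key i hi).symm)
      _ ≤ (∑ i ∈ s, |f i| ^ p) ^ (1/p) * (∑ i ∈ s, |g i| ^ q) ^ (1/q) := holder
      _ = S ^ (1/p) * h ^ (1/q) := by
          rw [hS, hh, Finset.sum_congr rfl hfp, Finset.sum_congr rfl hgq]
  have hinv : h ≤ μ⁻¹ := by
    rw [← one_div, le_div_iff₀ hμpos]
    linarith [mul_comm μ h]
  have h2 : (1:ℝ) ≤ S ^ (1/p) * (μ⁻¹) ^ (1/q) := by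
    refine h1.trans (mul_le_mul_of_nonneg_left ?_ (Real.rpow_nonneg hSnn _))
    exact Real.rpow_le_rpow hhnn hinv (by positivity)
  have h3 : μ ^ (1/q) ≤ S ^ (1/p) := by
    have := mul_le_mul_of_nonneg_right h2 (Real.rpow_nonneg hμ (1/q))
    rw [one_mul, mul_assoc, ← Real.mul_rpow (inv_nonneg.mpr hμ) hμ,
      inv_mul_cancel₀ hμpos.ne', Real.one_rpow, mul_one] at this
    exact this
  have h4 : μ ^ (p - 1) ≤ S := by
    have h5 := Real.rpow_le_rpow (Real.rpow_nonneg hμ _) h3 hp0.le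
    rw [← Real.rpow_mul hμ, ← Real.rpow_mul hSnn, one_div_mul_cancel hp0.ne',
      Real.rpow_one] at h5
    have he : 1/q * p = p - 1 := by
      rw [one_div, hq1]; field_simp
    rwa [he] at h5
  have h6 : S ≤ ∑ i, t i * lam i ^ (p - 1) := by
    apply Finset.sum_le_sum_of_subset_of_nonneg (Finset.subset_univ s)
    exact fun i _ _ => mul_nonneg (ht i) (Real.rpow_nonneg (hlam i) _)
  calc μ ^ p = μ ^ (1 + (p - 1)) := by norm_num
    _ = μ * μ ^ (p - 1) := by rw [Real.rpow_add hμpos, Real.rpow_one]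
    _ ≤ μ * ∑ i, t i * lam i ^ (p - 1) :=
        mul_le_mul_of_nonneg_left (h4.trans h6) hμ
open Matrix ComplexOrder

-- T1: trace of U * diagonal d * star U
lemma trace_unitary_diag {n : ℕ} (U : Matrix (Fin n) (Fin n) ℂ) (hU : star U * U = 1)
    (d : Fin n → ℂ) : Matrix.trace (U * Matrix.diagonal d * star U) = ∑ i, d i := by
  rw [Matrix.trace_mul_cycle, hU, Matrix.one_mul, Matrix.trace_diagonal]

-- T3: trace (M * diagonal d)
lemma trace_mul_diag {n : ℕ} (M : Matrix (Fin n) (Fin n) ℂ) (d : Fin n → ℂ) :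
    Matrix.trace (M * Matrix.diagonal d) = ∑ j, M j j * d j := by
  simp [Matrix.trace, Matrix.diag, Matrix.mul_apply, Matrix.diagonal]

-- T4: entries of star W * diagonal d * W
lemma triple_diag_apply {n : ℕ} (W : Matrix (Fin n) (Fin n) ℂ) (d : Fin n → ℂ) (j k : Fin n) :
    (star W * Matrix.diagonal d * W) j k = ∑ i, d i * (star (W i j) * W i k) := by
  simp only [Matrix.mul_apply, Matrix.diagonal_apply, Matrix.star_apply,
    Finset.sum_mul]
  rw [Finset.sum_comm]
  refine Finset.sum_congr rfl fun i _ => ?_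
  rw [Finset.sum_eq_single i (fun b _ hb => by simp [Ne.symm hb]) (by simp)]
  simp only [if_true, eq_self_iff_true]
  ring

-- T2: quadratic form of U * diagonal d * star U
lemma quadform_unitary_diag {n : ℕ} (U : Matrix (Fin n) (Fin n) ℂ)
    (d : Fin n → ℂ) (x : Fin n → ℂ) :
    dotProduct (star x) ((U * Matrix.diagonal d * star U) *ᵥ x) =
      ∑ i, d i * (star ((star U *ᵥ x) i) * ((star U *ᵥ x) i)) := by
  simp only [← Matrix.mulVec_mulVec]
  rw [Matrix.dotProduct_mulVec (star x) U]
  have h1 : star x ᵥ* U = star (star U *ᵥ x) := by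
    rw [Matrix.star_mulVec, Matrix.star_eq_conjTranspose, Matrix.conjTranspose_conjTranspose]
  rw [h1]
  set y := star U *ᵥ x
  simp only [Matrix.mulVec_diagonal, dotProduct, Pi.star_apply]
  exact Finset.sum_congr rfl fun i _ => by ring

open Finset in
lemma trace_cfc_le {n : ℕ} (p : ℝ) (hp : 1 < p) (A C : Matrix (Fin n) (Fin n) ℂ)
    (hA : A.PosSemidef) (hC : C.PosSemidef) (hAC : (C - A).PosSemidef) :
    Matrix.trace (cfc (fun t : ℝ => t ^ p) A) ≤
      Matrix.trace (cfc (fun t : ℝ => t ^ (p - 1)) C * A) := by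
  classical
  set U : Matrix (Fin n) (Fin n) ℂ :=
    (Matrix.IsHermitian.eigenvectorUnitary hC.1 : Matrix (Fin n) (Fin n) ℂ) with hUdef
  set V : Matrix (Fin n) (Fin n) ℂ :=
    (Matrix.IsHermitian.eigenvectorUnitary hA.1 : Matrix (Fin n) (Fin n) ℂ) with hVdef
  set lam := hC.1.eigenvalues with hlamdef
  set μ := hA.1.eigenvalues with hmudef
  have hlam0 : ∀ i, 0 ≤ lam i := hC.eigenvalues_nonneg
  have hmu0 : ∀ j, 0 ≤ μ j := hA.eigenvalues_nonneg
  have hUU : star U * U = 1 := Unitary.coe_star_mul_self _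
  have hUU' : U * star U = 1 := Unitary.coe_mul_star_self _
  have hVV : star V * V = 1 := Unitary.coe_star_mul_self _
  have hVV' : V * star V = 1 := Unitary.coe_mul_star_self _
  set W : Matrix (Fin n) (Fin n) ℂ := star U * V with hWdef
  have hWstar : star W = star V * U := by rw [hWdef, StarMul.star_mul, star_star]
  have hWW : star W * W = 1 := by
    rw [hWstar, hWdef, Matrix.mul_assoc, ← Matrix.mul_assoc U, hUU', Matrix.one_mul, hVV]
  set t : Fin n → Fin n → ℝ := fun i j => Complex.normSq (W i j) with htdef
  have ht0 : ∀ i j, 0 ≤ t i j := fun i j => Complex.normSq_nonneg _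
  have htsum : ∀ j, ∑ i, t i j = 1 := by
    intro j
    have h1 : (star W * W) j j = 1 := by rw [hWW]; simp
    rw [Matrix.mul_apply] at h1
    have h2 : ∑ i, ((t i j : ℂ)) = 1 := by
      rw [← h1]
      refine Finset.sum_congr rfl fun i _ => ?_
      rw [Matrix.star_apply, Complex.star_def, htdef]
      exact Complex.normSq_eq_conj_mul_self
    have h3 : ((∑ i, t i j : ℝ) : ℂ) = ((1:ℝ) : ℂ) := by rw [Complex.ofReal_sum, h2, Complex.ofReal_one]
    exact_mod_cast h3
  -- the quadratic-form constraint
  have hquad : ∀ (j : Fin n) (z : Fin n → ℂ),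
      μ j * Complex.normSq (∑ i, (starRingEnd ℂ) (W i j) * z i) ≤
        ∑ i, lam i * Complex.normSq (z i) := by
    intro j z
    set x := U *ᵥ z with hxdef
    have hback : star U *ᵥ x = z := by
      rw [hxdef, Matrix.mulVec_mulVec, hUU, Matrix.one_mulVec]
    have hWz : star V *ᵥ x = star W *ᵥ z := by
      rw [hxdef, Matrix.mulVec_mulVec, ← hWstar]
    have hxC : dotProduct (star x) (C *ᵥ x) = ((∑ i, lam i * Complex.normSq (z i) : ℝ) : ℂ) := by
      conv_lhs => rw [hC.1.spectral_theorem, Unitary.conjStarAlgAut_apply]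
      rw [quadform_unitary_diag, hback]
      rw [Complex.ofReal_sum]
      refine Finset.sum_congr rfl fun i _ => ?_
      simp only [Function.comp_apply]
      simp only [Complex.star_def]
      rw [← Complex.normSq_eq_conj_mul_self, Complex.ofReal_mul]
      rfl
    have hxA : dotProduct (star x) (A *ᵥ x)
        = ((∑ k, μ k * Complex.normSq ((star W *ᵥ z) k) : ℝ) : ℂ) := by
      conv_lhs => rw [hA.1.spectral_theorem, Unitary.conjStarAlgAut_apply]
      rw [quadform_unitary_diag, hWz]
      rw [Complex.ofReal_sum]
      refine Finset.sum_congr rfl fun k _ => ?_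
      simp only [Function.comp_apply]
      simp only [Complex.star_def]
      rw [← Complex.normSq_eq_conj_mul_self, Complex.ofReal_mul]
      rfl
    have hle : dotProduct (star x) (A *ᵥ x) ≤ dotProduct (star x) (C *ᵥ x) := by
      have h0 := hAC.dotProduct_mulVec_nonneg x
      rw [Matrix.sub_mulVec, dotProduct_sub] at h0
      exact sub_nonneg.mp h0
    rw [hxA, hxC, Complex.real_le_real] at hle
    refine le_trans ?_ hle
    have hj : (star W *ᵥ z) j = ∑ i, (starRingEnd ℂ) (W i j) * z i := by
      simp [Matrix.mulVec, dotProduct, Matrix.star_apply, Complex.star_def]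
    rw [← hj]
    exact Finset.single_le_sum (fun k _ => mul_nonneg (hmu0 k) (Complex.normSq_nonneg _))
      (Finset.mem_univ j)
  -- pointwise constraints
  have ha2 : ∀ j i, μ j * (t i j) ^ 2 ≤ lam i * t i j := by
    intro j i
    have h := hquad j (Pi.single i (W i j))
    have e1 : (∑ i', (starRingEnd ℂ) (W i' j) * (Pi.single i (W i j) : Fin n → ℂ) i') = ((t i j : ℝ) : ℂ) := by
      rw [Finset.sum_eq_single i (fun b _ hb => by simp [Pi.single_apply, hb]) (by simp)]
      rw [Pi.single_apply, if_pos rfl, htdef]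
      exact (Complex.normSq_eq_conj_mul_self).symm
    have e2 : (∑ i', lam i' * Complex.normSq ((Pi.single i (W i j) : Fin n → ℂ) i')) = lam i * t i j := by
      rw [Finset.sum_eq_single i (fun b _ hb => by simp [Pi.single_apply, hb]) (by simp)]
      rw [Pi.single_apply, if_pos rfl, htdef]
    rw [e1, e2, Complex.normSq_ofReal] at h
    rw [pow_two]
    exact h
  have hmuh : ∀ j, μ j * (∑ i ∈ univ.filter (fun i => lam i ≠ 0), t i j / lam i) ^ 2 ≤
      ∑ i ∈ univ.filter (fun i => lam i ≠ 0), t i j / lam i := by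
    intro j
    set hsum := ∑ i ∈ univ.filter (fun i => lam i ≠ 0), t i j / lam i with hhdef
    have h1 := hquad j (fun i => if lam i = 0 then 0 else (W i j) / (lam i : ℂ))
    have e1 : (∑ i, (starRingEnd ℂ) (W i j) *
        (if lam i = 0 then 0 else (W i j) / (lam i : ℂ))) = ((hsum : ℝ) : ℂ) := by
      rw [hhdef, Complex.ofReal_sum, Finset.sum_filter]
      refine Finset.sum_congr rfl fun i _ => ?_
      by_cases hl : lam i = 0
      · simp [hl]
      · rw [if_neg hl, if_pos hl, ← mul_div_assoc, ← Complex.normSq_eq_conj_mul_self,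
          Complex.ofReal_div]
    have e2 : (∑ i, lam i * Complex.normSq
        (if lam i = 0 then 0 else (W i j) / (lam i : ℂ))) = hsum := by
      rw [hhdef, Finset.sum_filter]
      refine Finset.sum_congr rfl fun i _ => ?_
      by_cases hl : lam i = 0
      · simp [hl]
      · rw [if_neg hl, if_pos hl, Complex.normSq_div, Complex.normSq_ofReal, htdef]
        field_simp
    rw [e1, e2, Complex.normSq_ofReal] at h1
    rw [pow_two]
    exact h1
  have hkey : ∀ j, μ j ^ p ≤ μ j * ∑ i, t i j * lam i ^ (p - 1) := fun j =>
    holder_key p hp lam (fun i => t i j) hlam0 (fun i => ht0 i j) (htsum j) (μ j) (hmu0 j)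
      (fun i => ha2 j i) (hmuh j)
  -- traces
  have hLHS : Matrix.trace (cfc (fun s : ℝ => s ^ p) A) = ∑ j, ((μ j ^ p : ℝ) : ℂ) := by
    rw [hA.1.cfc_eq]
    simp only [Matrix.IsHermitian.cfc]
    rw [Unitary.conjStarAlgAut_apply]
    rw [← hVdef, trace_unitary_diag V hVV]
    rfl
  have hRHS : Matrix.trace (cfc (fun s : ℝ => s ^ (p - 1)) C * A)
      = ∑ j, (∑ i, ((lam i ^ (p - 1) : ℝ) : ℂ) * ((t i j : ℝ) : ℂ)) * ((μ j : ℝ) : ℂ) := by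
    conv_lhs => rw [hC.1.cfc_eq, hA.1.spectral_theorem]
    simp only [Matrix.IsHermitian.cfc]
    simp only [Unitary.conjStarAlgAut_apply]
    rw [← hUdef, ← hVdef, ← hlamdef, ← hmudef]
    set Dg : Matrix (Fin n) (Fin n) ℂ := Matrix.diagonal (RCLike.ofReal ∘ (fun s : ℝ => s ^ (p - 1)) ∘ lam) with hDg
    set Dm : Matrix (Fin n) (Fin n) ℂ := Matrix.diagonal (RCLike.ofReal ∘ μ) with hDm
    have hassoc : (U * Dg * star U) * (V * Dm * star V)
        = ((U * Dg * star U) * (V * Dm)) * star V := by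
      simp only [Matrix.mul_assoc]
    rw [hassoc, Matrix.trace_mul_cycle]
    have hassoc2 : star V * (U * Dg * star U) * (V * Dm)
        = ((star V * (U * Dg * star U) * V) * Dm) := by
      simp only [Matrix.mul_assoc]
    rw [hassoc2]
    have hconj : star V * (U * Dg * star U) * V = star W * Dg * W := by
      rw [hWstar, hWdef]
      simp only [Matrix.mul_assoc]
    rw [hconj, hDm]
    rw [trace_mul_diag]
    refine Finset.sum_congr rfl fun j _ => ?_
    rw [triple_diag_apply]
    congr 1
    refine Finset.sum_congr rfl fun i _ => ?_
    simp only [Function.comp_apply]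
    have h1 : star (W i j) * W i j = ((t i j : ℝ) : ℂ) := by
      rw [Complex.star_def, htdef]
      exact (Complex.normSq_eq_conj_mul_self).symm
    rw [h1]
    rfl
  rw [hLHS, hRHS]
  refine Finset.sum_le_sum fun j _ => ?_
  have hcast : (∑ i, ((lam i ^ (p - 1) : ℝ) : ℂ) * ((t i j : ℝ) : ℂ)) * ((μ j : ℝ) : ℂ)
      = ((μ j * ∑ i, t i j * lam i ^ (p - 1) : ℝ) : ℂ) := by
    push_cast
    rw [Finset.mul_sum, Finset.sum_mul]
    refine Finset.sum_congr rfl fun i _ => ?_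
    ring
  rw [hcast]
  exact Complex.real_le_real.mpr (hkey j)

/-- McCarthy's inequality: for real `p > 1` and `A, B ≥ 0`,
`Tr (A+B)^p ≥ Tr A^p + Tr B^p`. -/
theorem trace_rpow_add_ge {n : ℕ} (hn : 1 ≤ n) (p : ℝ) (hp : 1 < p)
    (A B : Matrix (Fin n) (Fin n) ℂ) (hA : A.PosSemidef) (hB : B.PosSemidef) :
    Matrix.trace (cfc (fun t : ℝ => t ^ p) A) + Matrix.trace (cfc (fun t : ℝ => t ^ p) B) ≤
      Matrix.trace (cfc (fun t : ℝ => t ^ p) (A + B)) := by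
  have hC : (A + B).PosSemidef := hA.add hB
  have hsp : ∀ t ∈ spectrum ℝ (A + B), 0 ≤ t := by
    intro t ht
    rw [hC.1.spectrum_real_eq_range_eigenvalues] at ht
    obtain ⟨i, rfl⟩ := ht
    exact hC.eigenvalues_nonneg i
  have h2 : cfc (fun t : ℝ => t ^ (p - 1)) (A + B) * cfc (fun t : ℝ => t) (A + B)
      = cfc (fun t : ℝ => t ^ p) (A + B) := by
    rw [← cfc_mul (fun t : ℝ => t ^ (p - 1)) (fun t : ℝ => t) (A + B)
      ((Real.continuous_rpow_const (by linarith)).continuousOn)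
      continuous_id.continuousOn]
    apply cfc_congr
    intro t ht
    have ht0 := hsp t ht
    show t ^ (p - 1) * t = t ^ p
    calc t ^ (p - 1) * t = t ^ (p - 1) * t ^ (1:ℝ) := by rw [Real.rpow_one]
      _ = t ^ (p - 1 + 1) := (Real.rpow_add_of_nonneg ht0 (by linarith) zero_le_one).symm
      _ = t ^ p := by norm_num
  have h3 : cfc (fun t : ℝ => t) (A + B) = A + B := cfc_id' ℝ (A + B) hC.1.isSelfAdjoint
  rw [← h2, h3, mul_add, Matrix.trace_add]
  exact add_le_add
    (trace_cfc_le p hp A (A + B) hA hC (by simpa using hB))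
    (trace_cfc_le p hp B (A + B) hB hC (by simpa using hA))
end
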